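/- arXiv:1410.0445 — 7 statements merged into one kernel-verified Lean document; each statement's English description precedes it below -/
import Mathlib

section
/- Let m ≥ 2 and let μ be a proper (2m−1)-edge-coloring of the complete graph K_{2m} such that every two distinct colors induce a C4-factor. Then 2m = 2^n for some integer n ≥ 2 (i.e., 2m is a power of 2). -/
/-- `φ` is a proper edge-coloring of the complete graph on `V` (given as a function on
unordered pairs of vertices): two edges sharing a vertex receive distinct colors. -/
def IsProperEdgeColoring {V C : Type*} (φ : Sym2 V → C) : Prop :=
  ∀ u v w : V, u ≠ v → u ≠ w → v ≠ w → φ s(u, v) ≠ φ s(u, w)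

/-- The spanning subgraph of the complete graph on `V` consisting of the edges
colored `a` or `b`. -/
def colorPairGraph {V C : Type*} (φ : Sym2 V → C) (a b : C) : SimpleGraph V where
  Adj u v := u ≠ v ∧ (φ s(u, v) = a ∨ φ s(u, v) = b)
  symm := by
    constructor
    intro u v h
    exact ⟨h.1.symm, by rw [Sym2.eq_swap]; exact h.2⟩
  loopless := ⟨fun v h => h.1 rfl⟩

/-- A graph is a `C4`-factor (of the complete graph on its vertex type) if it is
2-regular and every connected component is a 4-cycle (equivalently, for a 2-regular
graph, every connected component has exactly 4 vertices). -/
def IsC4Factor {V : Type*} (G : SimpleGraph V) : Prop :=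
  (∀ v : V, (G.neighborSet v).ncard = 2) ∧
  ∀ c : G.ConnectedComponent, c.supp.ncard = 4

/-- The set of colors appearing on edges of the clique induced by the vertex set `S`. -/
def cliqueColors {V C : Type*} (φ : Sym2 V → C) (S : Set V) : Set C :=
  {c | ∃ u ∈ S, ∃ v ∈ S, u ≠ v ∧ φ s(u, v) = c}

/-!
Each color class of a proper `(2m-1)`-edge-coloring of `K_{2m}` is a perfect matching, i.e. a
fixed-point-free involution `σ a` of the vertices. If colors `a ≠ b` induce a `C4`-factor, the
component of `v` is `{v, σ a v, σ b v, σ b (σ a v)}`, and `σ a (σ b v)` lies in it only as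
`σ b (σ a v)`: the involutions commute. They therefore generate an abelian group of exponent `2`,
which acts transitively (`σ (φ s(v, u))` sends `v` to `u`) and hence, being abelian, regularly.
So the number of vertices is the order of a `2`-group.
-/

theorem Subgroup.pow_two_eq_one_of_mem_closure {G : Type*} [Group G] {k : Set G}
    (hcomm : ∀ x ∈ k, ∀ y ∈ k, x * y = y * x) (hk : ∀ x ∈ k, x ^ 2 = 1) {g : G}
    (hg : g ∈ closure k) : g ^ 2 = 1 := by
  have := isMulCommutative_closure hcomm
  induction hg using closure_induction with
  | mem x hx => exact hk x hx
  | one => exact one_pow 2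
  | mul x y hx hy hx2 hy2 => rw [Commute.mul_pow (setLike_mul_comm hx hy), hx2, hy2, one_mul]
  | inv x _ hx2 => rw [inv_pow, hx2, inv_one]

theorem Subgroup.nat_card_eq_of_isMulCommutative {α : Type*} (H : Subgroup (Equiv.Perm α))
    [IsMulCommutative H] (x : α) (htrans : ∀ y, ∃ g ∈ H, g x = y) : Nat.card H = Nat.card α := by
  refine Nat.card_congr (Equiv.ofBijective (fun g : H => (g : Equiv.Perm α) x) ⟨?_, ?_⟩)
  · intro g h hgh
    ext y
    obtain ⟨k, hk, rfl⟩ := htrans y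
    have hcomm : ∀ g ∈ H, g (k x) = k (g x) := fun g hg =>
      DFunLike.congr_fun (setLike_mul_comm hg hk) x
    rw [hcomm g g.2, hcomm h h.2]
    exact congrArg k hgh
  · intro y
    obtain ⟨g, hg, rfl⟩ := htrans y
    exact ⟨⟨g, hg⟩, rfl⟩

variable {V C : Type*}

/-- The color classes of `φ` are perfect matchings, `σ a` being the involution that swaps the
two ends of every edge of color `a`. -/
def IsColorMatching (φ : Sym2 V → C) (σ : C → Equiv.Perm V) : Prop :=
  ∀ a v u, σ a v = u ↔ u ≠ v ∧ φ s(v, u) = a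

theorem IsProperEdgeColoring.exists_isColorMatching [Fintype V] [DecidableEq V] [Fintype C]
    {φ : Sym2 V → C} (hφ : IsProperEdgeColoring φ) (hcard : Fintype.card C + 1 = Fintype.card V) :
    ∃ σ, IsColorMatching φ σ := by
  have hbij : ∀ v, Function.Bijective fun u : {u // u ≠ v} => φ s(v, u) := by
    refine fun v => (Fintype.bijective_iff_injective_and_card _).mpr ⟨?_, ?_⟩
    · rintro ⟨u, hu⟩ ⟨w, hw⟩ h
      by_contra hne
      exact hφ v u w hu.symm hw.symm (fun h' => hne (Subtype.ext h')) h
    · simp only [Fintype.card_subtype_compl, Fintype.card_unique]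
      omega
  let e v := Equiv.ofBijective _ (hbij v)
  have he : ∀ a v u, ((e v).symm a : V) = u ↔ u ≠ v ∧ φ s(v, u) = a := by
    refine fun a v u => ⟨?_, ?_⟩
    · rintro rfl
      exact ⟨((e v).symm a).2, (e v).apply_symm_apply a⟩
    · rintro ⟨hu, rfl⟩
      exact congrArg Subtype.val ((e v).symm_apply_apply ⟨u, hu⟩)
  have hinv : ∀ a, Function.Involutive fun v => ((e v).symm a : V) := by
    intro a v
    obtain ⟨hne, hcolor⟩ := (he a v _).mp rfl
    exact (he a _ v).mpr ⟨hne.symm, by rwa [Sym2.eq_swap]⟩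
  exact ⟨fun a => (hinv a).toPerm, he⟩

namespace IsColorMatching

variable {φ : Sym2 V → C} {σ : C → Equiv.Perm V}

theorem apply_ne (hσ : IsColorMatching φ σ) (a : C) (v : V) : σ a v ≠ v :=
  ((hσ a v _).mp rfl).1

theorem color_apply (hσ : IsColorMatching φ σ) (a : C) (v : V) : φ s(v, σ a v) = a :=
  ((hσ a v _).mp rfl).2

theorem apply_color (hσ : IsColorMatching φ σ) {u v : V} (h : u ≠ v) : σ (φ s(v, u)) v = u :=
  (hσ _ v u).mpr ⟨h, rfl⟩

theorem apply_eq_comm (hσ : IsColorMatching φ σ) {a : C} {u v : V} : σ a u = v ↔ σ a v = u := by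
  rw [hσ, hσ, ne_comm, Sym2.eq_swap]

theorem apply_apply (hσ : IsColorMatching φ σ) (a : C) (v : V) : σ a (σ a v) = v :=
  hσ.apply_eq_comm.mp rfl

theorem sq_eq_one (hσ : IsColorMatching φ σ) (a : C) : σ a ^ 2 = 1 :=
  Equiv.ext (hσ.apply_apply a)

theorem apply_ne_apply (hσ : IsColorMatching φ σ) {a b : C} (hab : a ≠ b) (v : V) :
    σ a v ≠ σ b v := fun h => hab (by rw [← hσ.color_apply a v, h, hσ.color_apply])

theorem colorPairGraph_adj_left (hσ : IsColorMatching φ σ) (a b : C) (v : V) :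
    (colorPairGraph φ a b).Adj v (σ a v) :=
  ⟨(hσ.apply_ne a v).symm, .inl (hσ.color_apply a v)⟩

theorem colorPairGraph_adj_right (hσ : IsColorMatching φ σ) (a b : C) (v : V) :
    (colorPairGraph φ a b).Adj v (σ b v) :=
  ⟨(hσ.apply_ne b v).symm, .inr (hσ.color_apply b v)⟩

theorem commute (hσ : IsColorMatching φ σ) {a b : C} (hab : a ≠ b)
    (h4 : ∀ c : (colorPairGraph φ a b).ConnectedComponent, c.supp.ncard = 4) :
    Commute (σ a) (σ b) := by
  refine Equiv.ext fun v => ?_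
  show σ a (σ b v) = σ b (σ a v)
  let c := (colorPairGraph φ a b).connectedComponentMk v
  have mem_a : ∀ w ∈ c.supp, σ a w ∈ c.supp := fun w hw =>
    c.mem_supp_of_adj_mem_supp hw (hσ.colorPairGraph_adj_left a b w)
  have mem_b : ∀ w ∈ c.supp, σ b w ∈ c.supp := fun w hw =>
    c.mem_supp_of_adj_mem_supp hw (hσ.colorPairGraph_adj_right a b w)
  have hv : v ∈ c.supp := rfl
  have h_ab : σ a v ≠ σ b v := hσ.apply_ne_apply hab v
  have hcycle : c.supp = {v, σ a v, σ b v, σ b (σ a v)} := by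
    have hfin : c.supp.Finite := Set.finite_of_ncard_ne_zero (by rw [h4 c]; decide)
    refine (Set.eq_of_subset_of_ncard_le ?_ ?_ hfin).symm
    · rintro w (rfl | rfl | rfl | rfl)
      exacts [hv, mem_a v hv, mem_b v hv, mem_b _ (mem_a v hv)]
    have h_bav : σ b (σ a v) ≠ v := fun h => h_ab (hσ.apply_eq_comm.mp h).symm
    have h_a_bav : σ a v ≠ σ b (σ a v) := (hσ.apply_ne b _).symm
    have h_b_bav : σ b v ≠ σ b (σ a v) := (σ b).injective.ne (hσ.apply_ne a v).symm
    rw [h4 c, Set.ncard_insert_of_notMem, Set.ncard_insert_of_notMem,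
      Set.ncard_insert_of_notMem, Set.ncard_singleton]
    · simpa using h_b_bav
    · simpa using ⟨h_ab, h_a_bav⟩
    · simpa using ⟨(hσ.apply_ne a v).symm, (hσ.apply_ne b v).symm, h_bav.symm⟩
  have habv : σ a (σ b v) ∈ c.supp := mem_a _ (mem_b v hv)
  rw [hcycle] at habv
  rcases habv with h | h | h | h
  · exact absurd (hσ.apply_eq_comm.mp h) h_ab
  · exact absurd ((σ a).injective h) (hσ.apply_ne b v)
  · exact absurd h (hσ.apply_ne a _)
  · exact h

theorem exists_card_eq_two_pow [Finite V] [Nonempty V] (hσ : IsColorMatching φ σ)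
    (hcomm : ∀ a b, Commute (σ a) (σ b)) : ∃ n, Nat.card V = 2 ^ n := by
  let H := Subgroup.closure (Set.range σ)
  have hcomm_range : ∀ x ∈ Set.range σ, ∀ y ∈ Set.range σ, x * y = y * x := by
    rintro _ ⟨a, rfl⟩ _ ⟨b, rfl⟩
    exact hcomm a b
  have := Subgroup.isMulCommutative_closure hcomm_range
  obtain ⟨v⟩ := ‹Nonempty V›
  have htrans : ∀ u, ∃ g ∈ H, g v = u := by
    intro u
    rcases eq_or_ne u v with rfl | hu
    · exact ⟨1, H.one_mem, rfl⟩
    · exact ⟨σ _, Subgroup.subset_closure ⟨_, rfl⟩, hσ.apply_color hu⟩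
  have h2 : IsPGroup 2 H := fun g => ⟨1, Subtype.ext <|
    Subgroup.pow_two_eq_one_of_mem_closure hcomm_range (by rintro _ ⟨a, rfl⟩; exact hσ.sq_eq_one a) g.2⟩
  rw [← H.nat_card_eq_of_isMulCommutative v htrans]
  exact IsPGroup.iff_card.mp h2

end IsColorMatching

/-- **Lemma 2(a).** If `μ` is a proper `(2m-1)`-edge-coloring of `K_{2m}`, `m ≥ 2`,
such that any two distinct colors induce a `C4`-factor, then `2m = 2ⁿ` for some `n ≥ 2`. -/
theorem order_pow_two_of_all_pairs_C4Factor (m : ℕ) (hm : 2 ≤ m)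
    (μ : Sym2 (Fin (2 * m)) → Fin (2 * m - 1))
    (hproper : IsProperEdgeColoring μ)
    (hC4 : ∀ a b : Fin (2 * m - 1), a ≠ b → IsC4Factor (colorPairGraph μ a b)) :
    ∃ n : ℕ, 2 ≤ n ∧ 2 * m = 2 ^ n := by
  obtain ⟨σ, hσ⟩ := hproper.exists_isColorMatching (by simp only [Fintype.card_fin]; omega)
  have hcomm : ∀ a b, Commute (σ a) (σ b) := by
    intro a b
    rcases eq_or_ne a b with rfl | hab
    · exact Commute.refl _
    · exact hσ.commute hab (hC4 a b hab).2
  have : Nonempty (Fin (2 * m)) := ⟨⟨0, by omega⟩⟩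
  obtain ⟨n, hn⟩ := hσ.exists_card_eq_two_pow hcomm
  rw [Nat.card_fin] at hn
  refine ⟨n, ?_, hn⟩
  by_contra! h
  interval_cases n <;> omega
end

section
/- Let m ≥ 2 and let μ be a proper (2m−1)-edge-coloring of the complete graph K_{2m} such that every two distinct colors induce a C4-factor, and write 2m = 2^n. Then for every k with 1 ≤ k ≤ n−1, K_{2m} contains a set of 2^k vertices such that the set of colors appearing on edges of the clique induced by these vertices has exactly 2^k − 1 elements (i.e., the restriction of μ to this clique is a proper (2^k − 1)-edge-coloring of K_{2^k}). -/
variable {V C : Type*} {μ : Sym2 V → C}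

theorem IsProperEdgeColoring.exists_partner [Fintype V] [Fintype C]
    (hμ : IsProperEdgeColoring μ) (hcard : Fintype.card V = Fintype.card C + 1)
    (c : C) (v : V) : ∃ u, u ≠ v ∧ μ s(u, v) = c := by
  classical
  let f : {u // u ≠ v} → C := fun u => μ s(u.1, v)
  have hf : Function.Injective f := fun u w h => by
    by_contra hne
    refine hμ v u w u.2.symm w.2.symm (Subtype.coe_ne_coe.mpr hne) ?_
    simpa only [f, Sym2.eq_swap] using h
  have hcard' : Fintype.card {u // u ≠ v} = Fintype.card C := by
    simp [Fintype.card_subtype_compl, hcard]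
  obtain ⟨u, hu⟩ := ((Fintype.bijective_iff_injective_and_card f).mpr ⟨hf, hcard'⟩).2 c
  exact ⟨u, u.2, hu⟩

def IsPartnerMap (μ : Sym2 V → C) (M : C → V → V) : Prop :=
  ∀ c u v, M c v = u ↔ u ≠ v ∧ μ s(u, v) = c

theorem IsProperEdgeColoring.exists_isPartnerMap [Fintype V] [Fintype C]
    (hμ : IsProperEdgeColoring μ) (hcard : Fintype.card V = Fintype.card C + 1) :
    ∃ M, IsPartnerMap μ M := by
  choose M hne hcolor using hμ.exists_partner hcard
  refine ⟨M, fun c u v => ⟨?_, fun ⟨huv, hu⟩ => ?_⟩⟩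
  · rintro rfl
    exact ⟨hne c v, hcolor c v⟩
  · by_contra h
    refine hμ v (M c v) u (hne c v).symm huv.symm h ?_
    rw [Sym2.eq_swap, hcolor, Sym2.eq_swap, hu]

def IsColorClosed (μ : Sym2 V → C) (M : C → V → V) (S : Set V) : Prop :=
  ∀ c ∈ cliqueColors μ S, Set.MapsTo (M c) S S

theorem isColorClosed_singleton (M : C → V → V) (x : V) : IsColorClosed μ M {x} := by
  rintro c ⟨u, rfl, v, rfl, hne, -⟩
  exact absurd rfl hne

namespace IsPartnerMap

variable {M : C → V → V} (hM : IsPartnerMap μ M) {S : Set V}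
include hM

theorem ne (c : C) (v : V) : M c v ≠ v := ((hM c _ v).1 rfl).1

theorem color (c : C) (v : V) : μ s(M c v, v) = c := ((hM c _ v).1 rfl).2

theorem apply_color {u v : V} (huv : u ≠ v) : M (μ s(u, v)) v = u := (hM _ u v).2 ⟨huv, rfl⟩

theorem involutive (c : C) : Function.Involutive (M c) := fun v =>
  (hM c v _).2 ⟨(hM.ne c v).symm, by rw [Sym2.eq_swap, hM.color]⟩

theorem commute_of_isC4Factor {a b : C} (hab : a ≠ b)
    (h : IsC4Factor (colorPairGraph μ a b)) (v : V) : M a (M b v) = M b (M a v) := by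
  classical
  set G := colorPairGraph μ a b
  have hadj : ∀ c x, c = a ∨ c = b → G.Adj (M c x) x := fun c x hc =>
    ⟨hM.ne c x, by rw [hM.color]; exact hc⟩
  have hreach : ∀ c x, c = a ∨ c = b → G.Reachable x v → G.Reachable (M c x) v :=
    fun c x hc hx => (hadj c x hc).reachable.trans hx
  by_contra hne
  have hab' : M a v ≠ M b v := fun h => hab (by rw [← hM.color a v, h, hM.color])
  have hinj : ∀ c, Function.Injective (M c) := fun c => (hM.involutive c).injective
  have hnodup : [v, M a v, M b v, M b (M a v), M a (M b v)].Nodup := by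
    simp only [List.nodup_cons, List.mem_cons, List.not_mem_nil, or_false, List.nodup_nil,
      and_true, not_or]
    have := hM.ne a v; have := hM.ne b v; have := hM.ne a (M b v); have := hM.ne b (M a v)
    have := hM.involutive a v; have := hM.involutive b v
    have := hinj a; have := hinj b
    grind
  have hsub : ↑[v, M a v, M b v, M b (M a v), M a (M b v)].toFinset ⊆
      (G.connectedComponentMk v).supp := by
    intro x hx
    rw [SimpleGraph.ConnectedComponent.mem_supp_iff, SimpleGraph.ConnectedComponent.eq]
    simp only [List.coe_toFinset, List.mem_cons, List.not_mem_nil, or_false] at hx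
    have hva := hreach a v (.inl rfl) .rfl
    have hvb := hreach b v (.inr rfl) .rfl
    rcases hx with rfl | rfl | rfl | rfl | rfl
    exacts [.rfl, hva, hvb, hreach b _ (.inr rfl) hva, hreach a _ (.inl rfl) hvb]
  have h4 := h.2 (G.connectedComponentMk v)
  have := Set.ncard_le_ncard hsub (Set.finite_of_ncard_ne_zero (by omega))
  rw [Set.ncard_coe_finset, List.toFinset_card_of_nodup hnodup, h4] at this
  simp at this

theorem eq_of_commute_of_apply_eq {f g : V → V} (hf : ∀ c y, f (M c y) = M c (f y))
    (hg : ∀ c y, g (M c y) = M c (g y)) {x : V} (hx : f x = g x) : f = g := by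
  funext y
  rcases eq_or_ne y x with rfl | hyx
  · exact hx
  · rw [← hM.apply_color hyx, hf, hg, hx]

theorem cliqueColors_eq_image (hS : IsColorClosed μ M S) {x : V} (hx : x ∈ S) :
    cliqueColors μ S = (fun v => μ s(x, v)) '' (S \ {x}) := by
  ext c
  constructor
  · rintro hc
    exact ⟨M c x, ⟨hS c hc hx, hM.ne c x⟩, by dsimp only; rw [Sym2.eq_swap, hM.color]⟩
  · rintro ⟨v, ⟨hv, hvx⟩, rfl⟩
    exact ⟨x, hx, v, hv, Ne.symm hvx, rfl⟩

theorem ncard_cliqueColors (hS : IsColorClosed μ M S) (hne : S.Nonempty) :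
    (cliqueColors μ S).ncard = S.ncard - 1 := by
  obtain ⟨x, hx⟩ := hne
  rw [hM.cliqueColors_eq_image hS hx, Set.InjOn.ncard_image, Set.ncard_sdiff_singleton_of_mem hx]
  rintro v ⟨-, hvx⟩ w ⟨-, hwx⟩ h
  dsimp only at h
  rw [← hM.apply_color hvx, ← hM.apply_color hwx, Sym2.eq_swap (a := v), h, Sym2.eq_swap]

theorem exists_notMem_cliqueColors (hS : IsColorClosed μ M S) (hne : S.Nonempty)
    (huniv : S ≠ Set.univ) : ∃ a, a ∉ cliqueColors μ S := by
  obtain ⟨x, hx⟩ := hne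
  obtain ⟨w, hw⟩ := (Set.ne_univ_iff_exists_notMem S).1 huniv
  have hwx : w ≠ x := fun h => hw (h ▸ hx)
  refine ⟨μ s(w, x), fun ha => hw ?_⟩
  rw [← hM.apply_color hwx]
  exact hS _ ha hx

theorem disjoint_image {a : C} (ha : a ∉ cliqueColors μ S) : Disjoint S (M a '' S) := by
  rw [Set.disjoint_left]
  rintro _ hx ⟨u, hu, rfl⟩
  exact ha ⟨M a u, hx, u, hu, hM.ne a u, hM.color a u⟩

theorem ncard_union_image {a : C} (ha : a ∉ cliqueColors μ S) (hfin : S.Finite) :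
    (S ∪ M a '' S).ncard = 2 * S.ncard := by
  rw [Set.ncard_union_eq (hM.disjoint_image ha) hfin (hfin.image _),
    Set.ncard_image_of_injective _ (hM.involutive a).injective, two_mul]

section Commuting

variable (hcomm : ∀ a b v, M a (M b v) = M b (M a v))
include hcomm

theorem color_apply_apply (a : C) {u v : V} (huv : u ≠ v) :
    μ s(M a u, M a v) = μ s(u, v) := by
  conv_lhs => rw [← hM.apply_color huv.symm, hcomm, Sym2.eq_swap, hM.color]
  rw [Sym2.eq_swap]

theorem comp_apply_color {a : C} {u v : V} (huv : u ≠ v) (hu : u ≠ M a v) :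
    M a ∘ M (μ s(u, v)) = M (μ s(u, M a v)) := by
  refine hM.eq_of_commute_of_apply_eq (fun c y => ?_) (fun c y => hcomm _ c y) (x := M a v) ?_
  · simp only [Function.comp_apply, hcomm _ c]
  · rw [Function.comp_apply, hcomm _ a, hM.involutive, hM.apply_color huv, hM.apply_color hu]

theorem isColorClosed_union_image (hS : IsColorClosed μ M S) (a : C) :
    IsColorClosed μ M (S ∪ M a '' S) := by
  set T := S ∪ M a '' S
  have hmapsA : Set.MapsTo (M a) T T := by
    rintro _ (hx | ⟨u, hu, rfl⟩)
    · exact .inr ⟨_, hx, rfl⟩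
    · exact .inl ((hM.involutive a u).symm ▸ hu)
  have hlift : ∀ c ∈ cliqueColors μ S, Set.MapsTo (M c) T T := by
    rintro c hc _ (hx | ⟨u, hu, rfl⟩)
    · exact .inl (hS c hc hx)
    · exact .inr ⟨_, hS c hc hu, hcomm a c u⟩
  have hcross : ∀ u ∈ S, ∀ v ∈ S, u ≠ M a v → Set.MapsTo (M (μ s(u, M a v))) T T := by
    intro u hu v hv huv
    rcases eq_or_ne u v with rfl | huv'
    · rw [Sym2.eq_swap, hM.color]
      exact hmapsA
    · rw [← hM.comp_apply_color hcomm huv' huv]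
      exact hmapsA.comp (hlift _ ⟨u, hu, v, hv, huv', rfl⟩)
  rintro b ⟨u, hu | ⟨u, hu, rfl⟩, v, hv | ⟨v, hv, rfl⟩, huv, rfl⟩
  · exact hlift _ ⟨u, hu, v, hv, huv, rfl⟩
  · exact hcross u hu v hv huv
  · rw [Sym2.eq_swap]
    exact hcross v hv u hu huv.symm
  · have huv' : u ≠ v := fun h => huv (h ▸ rfl)
    rw [hM.color_apply_apply hcomm a huv']
    exact hlift _ ⟨u, hu, v, hv, huv', rfl⟩

theorem exists_isColorClosed_ncard_eq [Finite V] {k : ℕ} (hk : 2 ^ k ≤ Nat.card V) :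
    ∃ S, IsColorClosed μ M S ∧ S.ncard = 2 ^ k := by
  induction k with
  | zero =>
    obtain ⟨x⟩ := (Nat.card_pos_iff (α := V)).1 (by omega) |>.1
    exact ⟨{x}, isColorClosed_singleton M x, Set.ncard_singleton x⟩
  | succ k ih =>
    obtain ⟨S, hS, hcard⟩ := ih (le_trans (Nat.pow_le_pow_right two_pos k.le_succ) hk)
    have hne : S.Nonempty := Set.nonempty_of_ncard_ne_zero (by rw [hcard]; positivity)
    have huniv : S ≠ Set.univ := by
      rintro rfl
      rw [Set.ncard_univ] at hcard
      rw [pow_succ] at hk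
      have := Nat.two_pow_pos k
      omega
    obtain ⟨a, ha⟩ := hM.exists_notMem_cliqueColors hS hne huniv
    exact ⟨_, hM.isColorClosed_union_image hcomm hS a,
      by rw [hM.ncard_union_image ha S.toFinite, hcard, pow_succ, mul_comm]⟩

end Commuting

end IsPartnerMap

theorem exists_clique_with_few_colors_general (m n : ℕ)
    (μ : Sym2 (Fin (2 * m)) → Fin (2 * m - 1))
    (hproper : IsProperEdgeColoring μ)
    (hC4 : ∀ a b : Fin (2 * m - 1), a ≠ b → IsC4Factor (colorPairGraph μ a b))
    (hpow : 2 * m = 2 ^ n) :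
    ∀ k : ℕ, 1 ≤ k → k ≤ n - 1 →
      ∃ S : Set (Fin (2 * m)), S.ncard = 2 ^ k ∧
        (cliqueColors μ S).ncard = 2 ^ k - 1 := by
  intro k _ hk
  have hcard : Fintype.card (Fin (2 * m)) = Fintype.card (Fin (2 * m - 1)) + 1 := by
    have := Nat.two_pow_pos n
    simp only [Fintype.card_fin]
    omega
  obtain ⟨M, hM⟩ := hproper.exists_isPartnerMap hcard
  have hcomm : ∀ a b v, M a (M b v) = M b (M a v) := by
    intro a b v
    rcases eq_or_ne a b with rfl | hab
    · rfl
    · exact hM.commute_of_isC4Factor hab (hC4 a b hab) v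
  obtain ⟨S, hS, hS_card⟩ := hM.exists_isColorClosed_ncard_eq hcomm (k := k) <| by
    rw [Nat.card_fin, hpow]
    exact Nat.pow_le_pow_right two_pos (by omega)
  refine ⟨S, hS_card, ?_⟩
  rw [hM.ncard_cliqueColors hS (Set.nonempty_of_ncard_ne_zero (by simp [hS_card])), hS_card]

/-- **Lemma 2(b).** If `μ` is a proper `(2m-1)`-edge-coloring of `K_{2m}`, `m ≥ 2`,
such that any two distinct colors induce a `C4`-factor, and `2m = 2ⁿ`, then for every
`1 ≤ k ≤ n - 1` there is a set of `2ᵏ` vertices whose induced clique uses exactly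
`2ᵏ - 1` colors. -/
theorem exists_clique_with_few_colors (m n : ℕ) (hm : 2 ≤ m)
    (μ : Sym2 (Fin (2 * m)) → Fin (2 * m - 1))
    (hproper : IsProperEdgeColoring μ)
    (hC4 : ∀ a b : Fin (2 * m - 1), a ≠ b → IsC4Factor (colorPairGraph μ a b))
    (hpow : 2 * m = 2 ^ n) :
    ∀ k : ℕ, 1 ≤ k → k ≤ n - 1 →
      ∃ S : Set (Fin (2 * m)), S.ncard = 2 ^ k ∧
        (cliqueColors μ S).ncard = 2 ^ k - 1 :=
  exists_clique_with_few_colors_general m n μ hproper hC4 hpow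
end

section
/- Let μ be a proper 7-edge-coloring of the complete graph K_8 such that every two distinct colors induce a C4-factor. Then the edge set of K_8 can be partitioned into 4 multicolored spanning trees that are pairwise isomorphic as graphs. -/
theorem IsProperEdgeColoring.comp_sym2Map {V W C : Type*} {μ : Sym2 V → C}
    (hμ : IsProperEdgeColoring μ) {σ : W → V} (hσ : Function.Injective σ) :
    IsProperEdgeColoring (μ ∘ Sym2.map σ) := fun _ _ _ huv huw hvw =>
  hμ _ _ _ (hσ.ne huv) (hσ.ne huw) (hσ.ne hvw)

def IsIsomorphicMulticoloredTreePartition {V C ι : Type*} (μ : Sym2 V → C)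
    (T : ι → SimpleGraph V) : Prop :=
  (∀ i, (T i).IsTree) ∧
  (∀ i, Set.InjOn μ (T i).edgeSet) ∧
  (∀ i j, i ≠ j → Disjoint (T i).edgeSet (T j).edgeSet) ∧
  (⋃ i, (T i).edgeSet) = (⊤ : SimpleGraph V).edgeSet ∧
  (∀ i j, Nonempty (T i ≃g T j))

theorem IsIsomorphicMulticoloredTreePartition.map {V W C ι : Type*} {μ : Sym2 V → C}
    {T : ι → SimpleGraph W} (σ : W ≃ V)
    (h : IsIsomorphicMulticoloredTreePartition (μ ∘ Sym2.map σ) T) :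
    IsIsomorphicMulticoloredTreePartition μ fun i => (T i).map σ.toEmbedding := by
  obtain ⟨htree, hinj, hdisj, hcover, hiso⟩ := h
  have hE (G : SimpleGraph W) : (G.map σ.toEmbedding).edgeSet = Sym2.map σ '' G.edgeSet :=
    SimpleGraph.edgeSet_map _ _
  have htop : (⊤ : SimpleGraph W).map σ.toEmbedding = ⊤ := by
    rw [← SimpleGraph.comap_symm]
    exact SimpleGraph.comap_top σ.symm.injective
  refine ⟨fun i => (SimpleGraph.Iso.map σ (T i)).isTree_iff.1 (htree i), fun i => ?_,
    fun i j hij => ?_, ?_, fun i j => ?_⟩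
  · rw [hE]
    exact (hinj i).image_of_comp
  · rw [hE, hE, Set.disjoint_image_iff (Sym2.map.injective σ.injective)]
    exact hdisj i j hij
  · simp_rw [hE]
    rw [← Set.image_iUnion, hcover, ← hE, htop]
  · obtain ⟨e⟩ := hiso i j
    exact ⟨(SimpleGraph.Iso.map σ (T i)).symm.trans (e.trans (SimpleGraph.Iso.map σ (T j)))⟩

theorem SimpleGraph.isTree_fromRel_of_iterate_eq {V : Type*} [Finite V] {p : V → V} {r : V}
    (hr : p r = r) (h : ∀ v, ∃ k, p^[k] v = r) : (fromRel fun u v => p u = v).IsTree := by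
  set G := fromRel fun u v => p u = v
  have hreach (v : V) : G.Reachable v r := by
    obtain ⟨k, hk⟩ := h v
    induction k generalizing v with
    | zero => exact hk ▸ .rfl
    | succ k ih =>
      refine .trans ?_ (ih (p v) (by rwa [← Function.iterate_succ_apply]))
      by_cases hv : v = p v
      · rw [← hv]
      · exact (show G.Adj v (p v) from ⟨hv, .inl rfl⟩).reachable
  have hconn : G.Connected :=
    (connected_iff_exists_forall_reachable G).2 ⟨r, fun v => (hreach v).symm⟩
  have hsub : G.edgeSet ⊆ (fun v => s(v, p v)) '' {r}ᶜ := by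
    intro e he
    induction e using Sym2.ind with | h u v => ?_
    obtain ⟨huv, rfl | rfl⟩ : u ≠ v ∧ (p u = v ∨ p v = u) := he
    · exact ⟨u, fun hu => huv (by rw [hu, hr]), rfl⟩
    · exact ⟨v, fun hv => huv (by rw [hv, hr]), Sym2.eq_swap⟩
  refine isTree_iff_connected_and_card.2
    ⟨hconn, le_antisymm ?_ hconn.card_vert_le_card_edgeSet_add_one⟩
  calc Nat.card G.edgeSet + 1 ≤ ({r}ᶜ : Set V).ncard + ({r} : Set V).ncard := by
        rw [Set.ncard_singleton, ← Nat.card_coe_set_eq]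
        exact Nat.add_le_add_right ((Set.ncard_le_ncard hsub).trans Set.ncard_image_le) 1
    _ = Nat.card V := Set.ncard_compl_add_ncard _

abbrev Cube := Fin 2 × Fin 2 × Fin 2

theorem Cube.add_eq_zero_iff : ∀ m n : Cube, m + n = 0 ↔ m = n := by decide

section CubeAct

variable {V : Type*}

def cubeAct (g₁ g₂ g₃ : V → V) (m : Cube) : V → V :=
  g₁^[m.1] ∘ g₂^[m.2.1] ∘ g₃^[m.2.2]

variable {g₁ g₂ g₃ : V → V}

theorem cubeAct_cubeAct (h₁ : Function.Involutive g₁) (h₂ : Function.Involutive g₂)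
    (h₃ : Function.Involutive g₃) (h₁₂ : Function.Commute g₁ g₂) (h₁₃ : Function.Commute g₁ g₃)
    (h₂₃ : Function.Commute g₂ g₃) (m n : Cube) (v : V) :
    cubeAct g₁ g₂ g₃ m (cubeAct g₁ g₂ g₃ n v) = cubeAct g₁ g₂ g₃ (m + n) v := by
  obtain ⟨a₁, a₂, a₃⟩ := m
  obtain ⟨b₁, b₂, b₃⟩ := n
  fin_cases a₁ <;> fin_cases a₂ <;> fin_cases a₃ <;> fin_cases b₁ <;> fin_cases b₂ <;>
    fin_cases b₃ <;> simp [cubeAct, h₁ _, h₂ _, h₃ _, h₁₂.eq, h₁₃.eq, h₂₃.eq]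

theorem Function.Commute.cubeAct {φ : V → V} (h₁ : Function.Commute g₁ φ)
    (h₂ : Function.Commute g₂ φ) (h₃ : Function.Commute g₃ φ) (m : Cube) :
    Function.Commute (cubeAct g₁ g₂ g₃ m) φ :=
  (h₁.iterate_left _).comp_left ((h₂.iterate_left _).comp_left (h₃.iterate_left _))

end CubeAct

section Partner

variable {V C : Type*} {μ : Sym2 V → C}

def IsColorPartner (μ : Sym2 V → C) (f : C → V → V) : Prop :=
  ∀ a v, f a v ≠ v ∧ μ s(v, f a v) = a

theorem IsProperEdgeColoring.exists_isColorPartner [Fintype V] [Fintype C]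
    (hμ : IsProperEdgeColoring μ) (hcard : Fintype.card V = Fintype.card C + 1) :
    ∃ f, IsColorPartner μ f := by
  classical
  have hsurj (v : V) : Function.Surjective fun w : {w // w ≠ v} => μ s(v, w) := by
    refine ((Fintype.bijective_iff_injective_and_card _).2 ⟨fun w w' h => ?_, ?_⟩).2
    · by_contra hne
      exact hμ v w w' w.2.symm w'.2.symm (Subtype.coe_ne_coe.2 hne) h
    · simp [Fintype.card_subtype_compl, hcard]
  choose f hf using hsurj
  exact ⟨fun a v => f v a, fun a v => ⟨(f v a).2, hf v a⟩⟩

namespace IsColorPartner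

variable {f : C → V → V}

theorem eq_of_color (hf : IsColorPartner μ f) (hμ : IsProperEdgeColoring μ) {a : C} {v w : V}
    (hw : w ≠ v) (h : μ s(v, w) = a) : w = f a v := by
  by_contra hne
  exact hμ v w (f a v) hw.symm (hf a v).1.symm hne (h.trans (hf a v).2.symm)

theorem involutive (hf : IsColorPartner μ f) (hμ : IsProperEdgeColoring μ) (a : C) :
    Function.Involutive (f a) := fun v =>
  (hf.eq_of_color hμ (hf a v).1.symm (by rw [Sym2.eq_swap]; exact (hf a v).2)).symm

theorem eq_of_apply_eq (hf : IsColorPartner μ f) {a b : C} {v : V} (h : f a v = f b v) : a = b :=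
  (hf a v).2.symm.trans (h ▸ (hf b v).2)

/-- The `a`/`b`-component of `v` contains `v`, `f a v`, `f b v` and `f b (f a v)`; having only four
vertices, it must contain `f a (f b v)` as `f b (f a v)`. -/
theorem commute_of_isC4Factor (hf : IsColorPartner μ f) (hμ : IsProperEdgeColoring μ) {a b : C}
    (hab : a ≠ b) (h : IsC4Factor (colorPairGraph μ a b)) : Function.Commute (f a) (f b) := by
  intro v
  set G := colorPairGraph μ a b
  have hadj (c : C) (hc : c = a ∨ c = b) (p : V) : G.Adj p (f c p) :=
    ⟨(hf c p).1.symm, by rw [(hf c p).2]; exact hc⟩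
  set S := (G.connectedComponentMk v).supp
  have hmem {w : V} (hw : G.Reachable v w) : w ∈ S := (SimpleGraph.ConnectedComponent.sound hw).symm
  have hfa := hf.involutive hμ a
  have hfb := hf.involutive hμ b
  set x := f a v
  set y := f b v
  set z := f b x
  have hvx : v ≠ x := (hf a v).1.symm
  have hvy : v ≠ y := (hf b v).1.symm
  have hxy : x ≠ y := fun h => hab (hf.eq_of_apply_eq h)
  have hxz : x ≠ z := (hf b x).1.symm
  have hvz : v ≠ z := fun h => hxy (hfb.eq_iff.1 h.symm)
  have hyz : y ≠ z := fun h => hvx (hfb.injective h)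
  have hvS : v ∈ S := hmem .rfl
  have hxS : x ∈ S := hmem (hadj a (.inl rfl) v).reachable
  have hyS : y ∈ S := hmem (hadj b (.inr rfl) v).reachable
  have hzS : z ∈ S := hmem ((hadj a (.inl rfl) v).reachable.trans (hadj b (.inr rfl) x).reachable)
  have hwS : f a y ∈ S :=
    hmem ((hadj b (.inr rfl) v).reachable.trans (hadj a (.inl rfl) y).reachable)
  have hS : ({v, x, y, z} : Set V) = S := by
    refine Set.eq_of_subset_of_ncard_le (by simp [Set.insert_subset_iff, *]) ?_
      (Set.finite_of_ncard_ne_zero (by rw [h.2]; simp))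
    rw [h.2, Set.ncard_insert_of_notMem (by simp [*]), Set.ncard_insert_of_notMem (by simp [*]),
      Set.ncard_pair hyz]
  rw [← hS] at hwS
  simp only [Set.mem_insert_iff, Set.mem_singleton_iff] at hwS
  rcases hwS with hw | hw | hw | hw
  · exact absurd (hfa.eq_iff.1 hw) hxy.symm
  · exact absurd (hfa.injective hw) hvy.symm
  · exact absurd hw (hf a y).1
  · exact hw

theorem color_map_of_commute (hf : IsColorPartner μ f) (hμ : IsProperEdgeColoring μ) {φ : V → V}
    (hφ : ∀ c, Function.Commute φ (f c)) {x y : V} (hxy : x ≠ y) :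
    μ s(φ x, φ y) = μ s(x, y) := by
  have hy : y = f (μ s(x, y)) x := hf.eq_of_color hμ hxy.symm rfl
  calc μ s(φ x, φ y) = μ s(φ x, f (μ s(x, y)) (φ x)) := by rw [← hφ _ x, ← hy]
    _ = μ s(x, y) := (hf _ _).2

theorem cubeAct_ne_self (hf : IsColorPartner μ f) (hμ : IsProperEdgeColoring μ) {c₁ c₂ c₃ : C}
    {v : V} (h₂₃ : c₂ ≠ c₃) (h₁₂ : c₁ ≠ c₂) (h₁₃ : c₁ ≠ c₃)
    (h₁₂₃ : c₁ ≠ μ s(v, f c₂ (f c₃ v))) {m : Cube} (hm : m ≠ 0) :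
    cubeAct (f c₁) (f c₂) (f c₃) m v ≠ v := by
  have hinv (c : C) {w : V} (h : f c w = v) : w = f c v := (hf.involutive hμ c).eq_iff.1 h
  obtain ⟨a₁, a₂, a₃⟩ := m
  fin_cases a₁ <;> fin_cases a₂ <;> fin_cases a₃ <;> simp [cubeAct] at hm ⊢ <;> intro h
  · exact (hf c₃ v).1 h
  · exact (hf c₂ v).1 h
  · exact h₂₃ (hf.eq_of_apply_eq (hinv c₂ h)).symm
  · exact (hf c₁ v).1 h
  · exact h₁₃ (hf.eq_of_apply_eq (hinv c₁ h)).symm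
  · exact h₁₂ (hf.eq_of_apply_eq (hinv c₁ h)).symm
  · exact h₁₂₃ ((hf c₁ v).2.symm.trans (by rw [← hinv c₁ h]))

end IsColorPartner

theorem IsProperEdgeColoring.exists_cube_equiv [Fintype V] [Fintype C] (hμ : IsProperEdgeColoring μ)
    (hC4 : ∀ a b, a ≠ b → IsC4Factor (colorPairGraph μ a b))
    (hV : Fintype.card V = 8) (hC : Fintype.card C = 7) :
    ∃ σ : Cube ≃ V, ∀ m n, m ≠ n → μ s(σ m, σ n) = μ s(σ 0, σ (m + n)) := by
  classical
  obtain ⟨f, hf⟩ := hμ.exists_isColorPartner (by rw [hV, hC])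
  have hcomm (a b : C) : Function.Commute (f a) (f b) := by
    rcases eq_or_ne a b with rfl | hab
    · exact Function.Commute.refl _
    · exact hf.commute_of_isC4Factor hμ hab (hC4 a b hab)
  obtain ⟨v₀⟩ : Nonempty V := Fintype.card_pos_iff.1 (by omega)
  obtain ⟨c₂, c₃, h₂₃⟩ := Fintype.exists_pair_of_one_lt_card (by omega : 1 < Fintype.card C)
  -- `c₁` must avoid the colors joining `v₀` to its orbit under `f c₂` and `f c₃`, so that the
  -- action of the cube is free.
  obtain ⟨c₁, -, h₁⟩ := Finset.exists_mem_notMem_of_card_lt_card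
    (s := {c₂, c₃, μ s(v₀, f c₂ (f c₃ v₀))}) (t := Finset.univ)
    (by rw [Finset.card_univ, hC]; exact (Finset.card_le_three).trans_lt (by norm_num))
  simp only [Finset.mem_insert, Finset.mem_singleton, not_or] at h₁
  obtain ⟨h₁₂, h₁₃, h₁₂₃⟩ := h₁
  set act := cubeAct (f c₁) (f c₂) (f c₃)
  have hact (m n : Cube) (v : V) : act m (act n v) = act (m + n) v :=
    cubeAct_cubeAct (hf.involutive hμ _) (hf.involutive hμ _) (hf.involutive hμ _)
      (hcomm _ _) (hcomm _ _) (hcomm _ _) m n v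
  have hfree {m : Cube} (hm : m ≠ 0) : act m v₀ ≠ v₀ :=
    hf.cubeAct_ne_self hμ h₂₃ h₁₂ h₁₃ h₁₂₃ hm
  have hinj : Function.Injective (act · v₀) := fun m n (h : act m v₀ = act n v₀) => by
    by_contra hmn
    refine hfree (mt (Cube.add_eq_zero_iff m n).1 hmn) ?_
    rw [← hact, ← h, hact, (Cube.add_eq_zero_iff m m).2 rfl]
    rfl
  refine ⟨Equiv.ofBijective _
    ((Fintype.bijective_iff_injective_and_card _).2 ⟨hinj, by simp [hV]⟩), fun m n hmn => ?_⟩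
  change μ s(act m v₀, act n v₀) = μ s(v₀, act (m + n) v₀)
  have hn : act n v₀ = act m (act (m + n) v₀) := by
    rw [hact, ← add_assoc, (Cube.add_eq_zero_iff m m).2 rfl, zero_add]
  have hφ (c : C) : Function.Commute (act m) (f c) :=
    Function.Commute.cubeAct (hcomm _ _) (hcomm _ _) (hcomm _ _) m
  rw [hn, hf.color_map_of_commute hμ hφ
    (hfree (mt (Cube.add_eq_zero_iff m n).1 hmn)).symm]

end Partner

def cubeTreeParent : Cube → Cube
  | (0, 0, 0) => (0, 0, 0)
  | (0, 0, 1) => (0, 0, 0)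
  | (0, 1, 0) => (1, 0, 0)
  | (0, 1, 1) => (0, 0, 1)
  | (1, 0, 0) => (1, 1, 1)
  | (1, 0, 1) => (0, 0, 0)
  | (1, 1, 0) => (0, 0, 1)
  | (1, 1, 1) => (0, 1, 1)

def cubeRelabel : Fin 4 → Cube → Cube
  | 0 => id
  | 1 => fun (a, b, c) => (b, a + b + 1, c)
  | 2 => fun (a, b, c) => (a, b + c, b)
  | 3 => fun (a, b, c) => (a + b, c, a)

def cubeTree (i : Fin 4) : SimpleGraph Cube :=
  (SimpleGraph.fromRel fun u v => cubeTreeParent u = v).comap (cubeRelabel i)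

instance (i : Fin 4) : DecidableRel (cubeTree i).Adj := fun _ _ =>
  inferInstanceAs (Decidable (_ ≠ _ ∧ (_ ∨ _)))

theorem cubeRelabel_bijective : ∀ i, Function.Bijective (cubeRelabel i) := by decide

theorem cubeTree_eq_of_add_eq : ∀ i u v u' v', (cubeTree i).Adj u v → (cubeTree i).Adj u' v' →
    u + v = u' + v' → s(u, v) = s(u', v') := by decide

theorem cubeTree_disjoint :
    ∀ i j, i ≠ j → ∀ u v, (cubeTree i).Adj u v → ¬(cubeTree j).Adj u v := by
  decide

theorem cubeTree_cover : ∀ u v : Cube, u ≠ v → ∃ i, (cubeTree i).Adj u v := by decide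

theorem isIsomorphicMulticoloredTreePartition_cubeTree {C : Type*} {ν : Sym2 Cube → C}
    (hν : IsProperEdgeColoring ν) (hdiff : ∀ m n, m ≠ n → ν s(m, n) = ν s(0, m + n)) :
    IsIsomorphicMulticoloredTreePartition ν cubeTree := by
  have hiso (i : Fin 4) : cubeTree i ≃g SimpleGraph.fromRel fun u v => cubeTreeParent u = v :=
    SimpleGraph.Iso.comap (Equiv.ofBijective _ (cubeRelabel_bijective i)) _
  have hadd {m n m' n' : Cube} (h : m ≠ n) (h' : m' ≠ n') (hc : ν s(m, n) = ν s(m', n')) :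
      m + n = m' + n' := by
    by_contra hne
    rw [hdiff m n h, hdiff m' n' h'] at hc
    exact hν 0 _ _ (fun h0 => h ((Cube.add_eq_zero_iff m n).1 h0.symm))
      (fun h0 => h' ((Cube.add_eq_zero_iff m' n').1 h0.symm)) hne hc
  refine ⟨fun i => (hiso i).isTree_iff.2 (SimpleGraph.isTree_fromRel_of_iterate_eq (r := 0) rfl
      fun v => ⟨5, by revert v; decide⟩), fun i e he e' he' hc => ?_, fun i j hij => ?_, ?_,
    fun i j => ⟨(hiso i).trans (hiso j).symm⟩⟩
  · induction e using Sym2.ind with | h u v => ?_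
    induction e' using Sym2.ind with | h u' v' => ?_
    rw [SimpleGraph.mem_edgeSet] at he he'
    exact cubeTree_eq_of_add_eq i u v u' v' he he' (hadd he.ne he'.ne hc)
  · refine Set.disjoint_left.2 fun e he he' => ?_
    induction e using Sym2.ind with | h u v => ?_
    exact cubeTree_disjoint i j hij u v he he'
  · ext e
    induction e using Sym2.ind with | h u v => ?_
    simp only [Set.mem_iUnion, SimpleGraph.mem_edgeSet, SimpleGraph.top_adj]
    exact ⟨fun ⟨i, h⟩ => h.ne, cubeTree_cover u v⟩

/-- **Lemma 3.** If `μ` is a proper 7-edge-coloring of `K₈` such that any two distinct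
colors induce a `C4`-factor, then the edges of `K₈` can be partitioned into 4 pairwise
isomorphic multicolored spanning trees. -/
theorem K8_partition_into_four_isomorphic_multicolored_spanning_trees
    (μ : Sym2 (Fin 8) → Fin 7)
    (hproper : IsProperEdgeColoring μ)
    (hC4 : ∀ a b : Fin 7, a ≠ b → IsC4Factor (colorPairGraph μ a b)) :
    ∃ T : Fin 4 → SimpleGraph (Fin 8),
      (∀ i, (T i).IsTree) ∧
      (∀ i, Set.InjOn μ (T i).edgeSet) ∧
      (∀ i j, i ≠ j → Disjoint (T i).edgeSet (T j).edgeSet) ∧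
      (⋃ i, (T i).edgeSet) = (⊤ : SimpleGraph (Fin 8)).edgeSet ∧
      (∀ i j, Nonempty (T i ≃g T j)) := by
  obtain ⟨σ, hσ⟩ := hproper.exists_cube_equiv hC4 (Fintype.card_fin 8) (Fintype.card_fin 7)
  exact ⟨_, (isIsomorphicMulticoloredTreePartition_cubeTree
    (hproper.comp_sym2Map σ.injective) hσ).map σ⟩
end

section
/- Let m ≥ 3 and let φ be an arbitrary proper (2m−1)-edge-coloring of the complete graph K_{2m}. Then there exist two edge-disjoint multicolored spanning trees of K_{2m} that are isomorphic as graphs. -/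
/-!
When `|V| = |C| + 1`, a proper colouring `φ` of the complete graph on `V` makes every colour
class a perfect matching, so each vertex `v` has a unique `c`-partner for every colour `c`.
For distinct `u, w, a`, the star at `u` on all vertices other than `w, a`, completed by the
edge from `w` to its `φ(ua)`-partner and the edge from `a` to its `φ(uw)`-partner, is a
multicolored spanning tree; its isomorphism type only depends on whether the two partners
coincide. If they differ for some triangle `u x a`, the trees built on `(u, x, a)` and on
`(x, u, b)`, with `b` the `φ(ua)`-partner of `x`, are edge-disjoint and isomorphic. If they
coincide for every triangle, the trees built on `(u, x, a)` and on `(x, y, B)`, with `y` the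
common partner and `B` any vertex outside a set of five, are.
-/

open SimpleGraph

variable {V C : Type*}

section Partner

variable {φ : Sym2 V → C}

def EveryVertexSeesEveryColor (φ : Sym2 V → C) : Prop :=
  ∀ (c : C) (v : V), ∃ w, w ≠ v ∧ φ s(v, w) = c

lemma IsProperEdgeColoring.everyVertexSeesEveryColor [Fintype V] [Fintype C]
    (hp : IsProperEdgeColoring φ) (hcard : Fintype.card V = Fintype.card C + 1) :
    EveryVertexSeesEveryColor φ := by
  classical
  intro c v
  let f : {w : V | w ≠ v} → C := fun w => φ s(v, w)
  have hf : Function.Injective f := fun w₁ w₂ h =>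
    Subtype.ext (by_contra fun hne => hp v w₁ w₂ (Ne.symm w₁.2) (Ne.symm w₂.2) hne h)
  have hcard' : Fintype.card {w : V | w ≠ v} = Fintype.card C := by
    rw [Set.card_ne_eq, hcard, Nat.add_sub_cancel]
  obtain ⟨w, hw⟩ := ((Fintype.bijective_iff_injective_and_card f).mpr ⟨hf, hcard'⟩).2 c
  exact ⟨w, w.2, hw⟩

-- The junk value `v` is never used: under `EveryVertexSeesEveryColor φ` the `if` always holds.
open Classical in
noncomputable def partner (φ : Sym2 V → C) (c : C) (v : V) : V :=
  if h : ∃ w, w ≠ v ∧ φ s(v, w) = c then h.choose else v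

variable (hs : EveryVertexSeesEveryColor φ)
include hs

lemma partner_ne_self (c : C) (v : V) : partner φ c v ≠ v := by
  rw [partner, dif_pos (hs c v)]
  exact (hs c v).choose_spec.1

lemma color_partner (c : C) (v : V) : φ s(v, partner φ c v) = c := by
  rw [partner, dif_pos (hs c v)]
  exact (hs c v).choose_spec.2

lemma eq_partner_of_color_eq (hp : IsProperEdgeColoring φ) {c : C} {v w : V} (hw : w ≠ v)
    (hc : φ s(v, w) = c) : w = partner φ c v :=
  by_contra fun hne => hp v w _ hw.symm (partner_ne_self hs c v).symm hne
    (hc.trans (color_partner hs c v).symm)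

lemma partner_partner (hp : IsProperEdgeColoring φ) (c : C) (v : V) :
    partner φ c (partner φ c v) = v :=
  (eq_partner_of_color_eq hs hp (partner_ne_self hs c v).symm
    (by rw [Sym2.eq_swap, color_partner hs])).symm

end Partner

section TwoPendantStar

def twoPendantStar (u w a z₁ z₂ : V) : SimpleGraph V :=
  fromEdgeSet ((fun v => s(u, v)) '' {u, w, a}ᶜ ∪ {s(w, z₁), s(a, z₂)})

structure TwoPendantStarData (u w a z₁ z₂ : V) : Prop where
  ne_uw : u ≠ w
  ne_ua : u ≠ a
  ne_wa : w ≠ a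
  z₁_ne_u : z₁ ≠ u
  z₁_ne_w : z₁ ≠ w
  z₁_ne_a : z₁ ≠ a
  z₂_ne_u : z₂ ≠ u
  z₂_ne_w : z₂ ≠ w
  z₂_ne_a : z₂ ≠ a

def twoPendantStar.isoOfPerm (σ : Equiv.Perm V) (u w a z₁ z₂ : V) :
    twoPendantStar u w a z₁ z₂ ≃g twoPendantStar (σ u) (σ w) (σ a) (σ z₁) (σ z₂) where
  toEquiv := σ
  map_rel_iff' {p q} := by
    simp only [twoPendantStar, fromEdgeSet_adj, σ.injective.ne_iff, Set.mem_union,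
      Set.mem_insert_iff, Set.mem_singleton_iff, Set.mem_image, Set.mem_compl_iff]
    rw [σ.surjective.exists]
    simp only [σ.injective.eq_iff, ← Sym2.map_mk, (Sym2.map.injective σ.injective).eq_iff]

namespace TwoPendantStarData

variable {u w a z₁ z₂ : V} (h : TwoPendantStarData u w a z₁ z₂)
include h

lemma edgeSet_eq : (twoPendantStar u w a z₁ z₂).edgeSet =
    (fun v => s(u, v)) '' {u, w, a}ᶜ ∪ {s(w, z₁), s(a, z₂)} := by
  rw [twoPendantStar, edgeSet_fromEdgeSet, sdiff_eq_left, Set.disjoint_right]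
  rintro e he (⟨v, hv, rfl⟩ | rfl | rfl)
  · exact hv (Or.inl (Sym2.mk_isDiag_iff.mp he).symm)
  · exact h.z₁_ne_w (Sym2.mk_isDiag_iff.mp he).symm
  · exact h.z₂_ne_a (Sym2.mk_isDiag_iff.mp he).symm

lemma connected : (twoPendantStar u w a z₁ z₂).Connected := by
  have : Nonempty V := ⟨u⟩
  have hadj : ∀ v ∉ ({u, w, a} : Set V), (twoPendantStar u w a z₁ z₂).Adj u v := fun v hv =>
    (twoPendantStar u w a z₁ z₂).mem_edgeSet.mp (h.edgeSet_eq ▸ Or.inl ⟨v, hv, rfl⟩)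
  have hpend : ∀ {x z}, s(x, z) ∈ ({s(w, z₁), s(a, z₂)} : Set (Sym2 V)) →
      (twoPendantStar u w a z₁ z₂).Adj x z := fun hx =>
    (twoPendantStar u w a z₁ z₂).mem_edgeSet.mp (h.edgeSet_eq ▸ Or.inr hx)
  have hreach : ∀ v, (twoPendantStar u w a z₁ z₂).Reachable u v := by
    intro v
    by_cases hv : v ∈ ({u, w, a} : Set V)
    · rcases hv with rfl | rfl | rfl
      · rfl
      · exact (hadj z₁ (by simp [h.z₁_ne_u, h.z₁_ne_w, h.z₁_ne_a])).reachable.trans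
          (hpend (x := z₁) (by simp [Sym2.eq_swap])).reachable
      · exact (hadj z₂ (by simp [h.z₂_ne_u, h.z₂_ne_w, h.z₂_ne_a])).reachable.trans
          (hpend (x := z₂) (by simp [Sym2.eq_swap])).reachable
    · exact (hadj v hv).reachable
  exact ⟨fun v₁ v₂ => (hreach v₁).symm.trans (hreach v₂)⟩

lemma disjoint_star_pendants :
    Disjoint ((fun v => s(u, v)) '' {u, w, a}ᶜ) {s(w, z₁), s(a, z₂)} := by
  rw [Set.disjoint_right]
  rintro e (rfl | rfl) ⟨v, -, he⟩ <;>
    rcases Sym2.eq_iff.mp he with ⟨rfl, -⟩ | ⟨rfl, -⟩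
  exacts [h.ne_uw rfl, h.z₁_ne_u rfl, h.ne_ua rfl, h.z₂_ne_u rfl]

lemma ncard_edgeSet_add_one [Finite V] :
    (twoPendantStar u w a z₁ z₂).edgeSet.ncard + 1 = Nat.card V := by
  have hpair : s(w, z₁) ≠ s(a, z₂) := by simp [h.ne_wa, h.z₂_ne_w.symm]
  have hthree : ({u, w, a} : Set V).ncard = 3 :=
    Set.ncard_eq_three.mpr ⟨u, w, a, h.ne_uw, h.ne_ua, h.ne_wa, rfl⟩
  have := Set.ncard_add_ncard_compl ({u, w, a} : Set V)
  rw [h.edgeSet_eq, Set.ncard_union_eq h.disjoint_star_pendants, Set.ncard_pair hpair,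
    Set.ncard_image_of_injective _ (fun _ _ => Sym2.congr_right.mp)]
  omega

lemma isTree [Finite V] : (twoPendantStar u w a z₁ z₂).IsTree :=
  isTree_iff_connected_and_card.mpr
    ⟨h.connected, by rw [Nat.card_coe_set_eq, h.ncard_edgeSet_add_one]⟩

end TwoPendantStarData

lemma TwoPendantStarData.nonempty_iso {u w a z₁ z₂ u' w' a' z₁' z₂' : V}
    (h : TwoPendantStarData u w a z₁ z₂) (h' : TwoPendantStarData u' w' a' z₁' z₂')
    (hz : z₁ = z₂ ↔ z₁' = z₂') :
    Nonempty (twoPendantStar u w a z₁ z₂ ≃g twoPendantStar u' w' a' z₁' z₂') := by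
  suffices ∃ σ : Equiv.Perm V,
      σ u = u' ∧ σ w = w' ∧ σ a = a' ∧ σ z₁ = z₁' ∧ σ z₂ = z₂' by
    obtain ⟨σ, rfl, rfl, rfl, rfl, rfl⟩ := this
    exact ⟨twoPendantStar.isoOfPerm σ u w a z₁ z₂⟩
  obtain ⟨_, _, _, _, _, _, _, _, _⟩ := h
  obtain ⟨_, _, _, _, _, _, _, _, _⟩ := h'
  by_cases hz₁₂ : z₁ = z₂
  · obtain rfl := hz₁₂
    obtain rfl := hz.mp rfl
    have hinj : Function.Injective ![u, w, a, z₁] ∧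
        Function.Injective ![u', w', a', z₁'] := by
      constructor <;> intro i j <;> fin_cases i <;> fin_cases j <;> simp_all [eq_comm]
    obtain ⟨σ, hσ⟩ := Equiv.Perm.exists_extending_pair _ _ hinj.1 hinj.2
    exact ⟨σ, hσ 0, hσ 1, hσ 2, hσ 3, hσ 3⟩
  · have hinj : Function.Injective ![u, w, a, z₁, z₂] ∧
        Function.Injective ![u', w', a', z₁', z₂'] := by
      constructor <;> intro i j <;> fin_cases i <;> fin_cases j <;> simp_all [eq_comm]
    obtain ⟨σ, hσ⟩ := Equiv.Perm.exists_extending_pair _ _ hinj.1 hinj.2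
    exact ⟨σ, hσ 0, hσ 1, hσ 2, hσ 3, hσ 4⟩

end TwoPendantStar

section Multicolored

variable {φ : Sym2 V → C}

-- The star at `u` misses exactly the colors `φ s(u, w)` and `φ s(u, a)`, which are the colors
-- of the two pendant edges.
noncomputable def multicoloredTree (φ : Sym2 V → C) (u w a : V) : SimpleGraph V :=
  twoPendantStar u w a (partner φ (φ s(u, a)) w) (partner φ (φ s(u, w)) a)

variable (hp : IsProperEdgeColoring φ) (hs : EveryVertexSeesEveryColor φ)
include hp hs

lemma partner_opposite_color_ne {u w a : V} (huw : u ≠ w) (hua : u ≠ a) (hwa : w ≠ a) :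
    partner φ (φ s(u, a)) w ≠ u ∧ partner φ (φ s(u, a)) w ≠ a := by
  have h := color_partner hs (φ s(u, a)) w
  constructor <;> intro he <;> rw [he] at h
  · exact hp u w a huw hua hwa (by rw [Sym2.eq_swap, h])
  · exact hp a w u hwa.symm hua.symm huw.symm (by rw [Sym2.eq_swap, h, Sym2.eq_swap])

lemma twoPendantStarData_multicoloredTree {u w a : V} (huw : u ≠ w) (hua : u ≠ a)
    (hwa : w ≠ a) :
    TwoPendantStarData u w a (partner φ (φ s(u, a)) w) (partner φ (φ s(u, w)) a) :=
  have h₁ := partner_opposite_color_ne hp hs huw hua hwa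
  have h₂ := partner_opposite_color_ne hp hs hua huw hwa.symm
  ⟨huw, hua, hwa, h₁.1, partner_ne_self hs _ w, h₁.2, h₂.1, h₂.2, partner_ne_self hs _ a⟩

lemma injOn_multicoloredTree {u w a : V} (huw : u ≠ w) (hua : u ≠ a) (hwa : w ≠ a) :
    Set.InjOn φ (multicoloredTree φ u w a).edgeSet := by
  have h := twoPendantStarData_multicoloredTree hp hs huw hua hwa
  rw [multicoloredTree, h.edgeSet_eq, Set.injOn_union h.disjoint_star_pendants,
    Set.injOn_pair, color_partner hs, color_partner hs]
  refine ⟨Set.InjOn.image_of_comp fun v hv v' hv' hvv' => ?_,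
    fun hcol => absurd hcol.symm (hp u w a huw hua hwa), ?_⟩
  · by_contra hne
    exact hp u v v' (fun h => hv (.inl h.symm)) (fun h => hv' (.inl h.symm)) hne hvv'
  · rintro _ ⟨v, hv, rfl⟩ _ (rfl | rfl) <;> rw [color_partner hs]
    exacts [hp u v a (fun h => hv (.inl h.symm)) hua (fun h => hv (.inr (.inr h))),
      hp u v w (fun h => hv (.inl h.symm)) huw (fun h => hv (.inr (.inl h)))]

end Multicolored

structure MulticoloredTwins (φ : Sym2 V → C) (T₁ T₂ : SimpleGraph V) : Prop where
  isTree_left : T₁.IsTree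
  isTree_right : T₂.IsTree
  injOn_left : Set.InjOn φ T₁.edgeSet
  injOn_right : Set.InjOn φ T₂.edgeSet
  disjoint : Disjoint T₁.edgeSet T₂.edgeSet
  nonempty_iso : Nonempty (T₁ ≃g T₂)

section Twins

variable [Finite V] {φ : Sym2 V → C} (hp : IsProperEdgeColoring φ)
  (hs : EveryVertexSeesEveryColor φ)
include hp hs

lemma multicoloredTwins_of_partner_ne {u x a : V} (hux : u ≠ x) (hua : u ≠ a) (hxa : x ≠ a)
    (hne : partner φ (φ s(u, x)) a ≠ partner φ (φ s(u, a)) x) :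
    MulticoloredTwins φ (multicoloredTree φ u x a)
      (multicoloredTree φ x u (partner φ (φ s(u, a)) x)) := by
  set c := φ s(u, x) with hc
  set d := φ s(u, a)
  set b := partner φ d x
  set z := partner φ c a
  set q := partner φ c b
  have h₁ : TwoPendantStarData u x a b z :=
    twoPendantStarData_multicoloredTree hp hs hux hua hxa
  have h₂ : TwoPendantStarData x u b (partner φ (φ s(x, b)) u) (partner φ (φ s(x, u)) b) :=
    twoPendantStarData_multicoloredTree hp hs hux.symm h₁.z₁_ne_w.symm h₁.z₁_ne_u.symm
  have hau : partner φ d u = a := (eq_partner_of_color_eq hs hp hua.symm rfl).symm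
  rw [color_partner hs, Sym2.eq_swap, ← hc, hau] at h₂
  have hT₂ : multicoloredTree φ x u b = twoPendantStar x u b a q := by
    rw [multicoloredTree, color_partner hs, Sym2.eq_swap, ← hc, hau]
  have hT₁ : multicoloredTree φ u x a = twoPendantStar u x a b z := rfl
  have hqa : a ≠ q := fun haq => hne <| by
    rw [show z = partner φ c a from rfl, haq, partner_partner hs hp]
  have hinj₂ := injOn_multicoloredTree hp hs hux.symm h₁.z₁_ne_w.symm h₁.z₁_ne_u.symm
  rw [hT₂] at hinj₂ ⊢
  rw [hT₁]
  refine ⟨h₁.isTree, h₂.isTree, injOn_multicoloredTree hp hs hux hua hxa, hinj₂, ?_,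
    h₁.nonempty_iso h₂ (iff_of_false hne.symm hqa)⟩
  rw [Set.disjoint_left]
  rintro ⟨v, v'⟩ he₁ he₂
  simp only [twoPendantStar, edgeSet_fromEdgeSet, Set.mem_sdiff,
    Set.mem_union, Set.mem_image, Set.mem_insert_iff, Set.mem_singleton_iff,
    Set.mem_compl_iff, Sym2.eq_iff] at he₁ he₂
  obtain ⟨_, _, _, _, _, _, _, _, _⟩ := h₁
  obtain ⟨_, _, _, _, _, _, _, _, _⟩ := h₂
  grind

lemma multicoloredTwins_of_partner_eq
    (hsym : ∀ u x a : V, u ≠ x → u ≠ a → x ≠ a →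
      partner φ (φ s(u, x)) a = partner φ (φ s(u, a)) x)
    {u x a y B : V} (hux : u ≠ x) (hua : u ≠ a) (hxa : x ≠ a)
    (hy : y = partner φ (φ s(u, a)) x)
    (hB : B ∉ ({u, x, a, y, partner φ (φ s(u, y)) x} : Set V)) :
    MulticoloredTwins φ (multicoloredTree φ u x a) (multicoloredTree φ x y B) := by
  simp only [Set.mem_insert_iff, Set.mem_singleton_iff, not_or] at hB
  obtain ⟨hBu, hBx, hBa, hBy, hBz⟩ := hB
  have h₁ := twoPendantStarData_multicoloredTree hp hs hux hua hxa
  rw [hsym u x a hux hua hxa, ← hy] at h₁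
  have h₂ :=
    twoPendantStarData_multicoloredTree hp hs h₁.z₁_ne_w.symm (Ne.symm hBx) (Ne.symm hBy)
  set p := partner φ (φ s(x, B)) y
  rw [hsym x y B h₁.z₁_ne_w.symm (Ne.symm hBx) (Ne.symm hBy)] at h₂
  have hT₁ : multicoloredTree φ u x a = twoPendantStar u x a y y := by
    rw [multicoloredTree, hsym u x a hux hua hxa, ← hy]
  have hT₂ : multicoloredTree φ x y B = twoPendantStar x y B p p := by
    rw [multicoloredTree, hsym x y B h₁.z₁_ne_w.symm (Ne.symm hBx) (Ne.symm hBy)]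
  have hcol : φ s(y, p) = φ s(x, B) := color_partner hs _ y
  have hpu : p ≠ u := fun hpu => hBz <| by
    rw [hpu, Sym2.eq_swap] at hcol
    exact eq_partner_of_color_eq hs hp hBx hcol.symm
  have hpa : p ≠ a := fun hpa => by
    have hya := color_partner hs (φ s(u, x)) a
    rw [hsym u x a hux hua hxa, ← hy] at hya
    rw [hpa, Sym2.eq_swap, hya, Sym2.eq_swap] at hcol
    exact hp x B u (Ne.symm hBx) hux.symm hBu hcol.symm
  have hinj₁ := injOn_multicoloredTree hp hs hux hua hxa
  have hinj₂ :=
    injOn_multicoloredTree hp hs h₁.z₁_ne_w.symm (Ne.symm hBx) (Ne.symm hBy)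
  rw [hT₁] at hinj₁ ⊢
  rw [hT₂] at hinj₂ ⊢
  refine ⟨h₁.isTree, h₂.isTree, hinj₁, hinj₂, ?_, h₁.nonempty_iso h₂ (iff_of_true rfl rfl)⟩
  rw [Set.disjoint_left]
  rintro ⟨v, v'⟩ he₁ he₂
  simp only [twoPendantStar, edgeSet_fromEdgeSet, Set.mem_sdiff,
    Set.mem_union, Set.mem_image, Set.mem_insert_iff, Set.mem_singleton_iff,
    Set.mem_compl_iff, Sym2.eq_iff] at he₁ he₂
  obtain ⟨_, _, _, _, _, _, _, _, _⟩ := h₁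
  obtain ⟨_, _, _, _, _, _, _, _, _⟩ := h₂
  grind

end Twins

theorem exists_multicoloredTwins [Fintype V] {φ : Sym2 V → C} (hp : IsProperEdgeColoring φ)
    (hs : EveryVertexSeesEveryColor φ) (hV : 6 ≤ Fintype.card V) :
    ∃ T₁ T₂ : SimpleGraph V, MulticoloredTwins φ T₁ T₂ := by
  classical
  by_cases hsym : ∀ u x a : V, u ≠ x → u ≠ a → x ≠ a →
      partner φ (φ s(u, x)) a = partner φ (φ s(u, a)) x
  · obtain ⟨u, x, a, hux, hua, hxa⟩ := Fintype.two_lt_card_iff (α := V).mp (by omega)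
    set y := partner φ (φ s(u, a)) x
    have hcard : 5 < (Finset.univ : Finset V).card := by rw [Finset.card_univ]; omega
    obtain ⟨B, -, hB⟩ := Finset.exists_mem_notMem_of_card_lt_card
      (s := {u, x, a, y, partner φ (φ s(u, y)) x}) (Finset.card_le_five.trans_lt hcard)
    exact ⟨_, _, multicoloredTwins_of_partner_eq hp hs hsym hux hua hxa rfl (by simpa using hB)⟩
  · push Not at hsym
    obtain ⟨u, x, a, hux, hua, hxa, hne⟩ := hsym
    exact ⟨_, _, multicoloredTwins_of_partner_ne hp hs hux hua hxa hne⟩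

/-- **Lemma 5.** For any proper `(2m-1)`-edge-coloring `φ` of `K_{2m}` with `m ≥ 3`,
there exist two edge-disjoint multicolored spanning trees of `K_{2m}` that are
isomorphic as graphs. -/
theorem exists_two_disjoint_isomorphic_multicolored_spanning_trees (m : ℕ) (hm : 3 ≤ m)
    (φ : Sym2 (Fin (2 * m)) → Fin (2 * m - 1))
    (hproper : IsProperEdgeColoring φ) :
    ∃ T₁ T₂ : SimpleGraph (Fin (2 * m)),
      T₁.IsTree ∧ T₂.IsTree ∧
      Set.InjOn φ T₁.edgeSet ∧ Set.InjOn φ T₂.edgeSet ∧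
      Disjoint T₁.edgeSet T₂.edgeSet ∧
      Nonempty (T₁ ≃g T₂) := by
  have hs := hproper.everyVertexSeesEveryColor (by simp only [Fintype.card_fin]; omega)
  obtain ⟨T₁, T₂, h⟩ := exists_multicoloredTwins hproper hs (by rw [Fintype.card_fin]; omega)
  exact ⟨T₁, T₂, h.isTree_left, h.isTree_right, h.injOn_left, h.injOn_right, h.disjoint,
    h.nonempty_iso⟩
end

section
/- Let μ be a proper (2m−1)-edge-coloring of the complete graph K_{2m} such that every two distinct colors induce a C4-factor. Let a and c be distinct colors, let x and y be distinct vertices with μ(xy) = a, and let x′ and y′ be the vertices joined to x and to y, respectively, by an edge of color c. Then x, y, x′, y′ are four distinct vertices and μ(x′y′) = a. -/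
/-!
Fix `a ≠ c`. The path `x' - x - y - y'` lies in the `C4`-factor of colors `a` and `c`. That
factor has no triangles, so `x' ≠ y'`, and the component of `x` is exactly `{x', x, y, y'}`. The
second neighbour of `x'` in this component can be neither `x` nor `y` (the latter would close a
triangle), so `x'y'` is an edge of the factor; its color is not `c` because `yy'` already has
color `c`.
-/

namespace SimpleGraph

variable {V : Type*} {G : SimpleGraph V}

lemma connectedComponentMk_supp_subset_of_neighborSet_subset {S : Set V}
    (hS : ∀ u ∈ S, G.neighborSet u ⊆ S) {v : V} (hv : v ∈ S) :
    (G.connectedComponentMk v).supp ⊆ S := by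
  intro w hw
  by_contra hwS
  obtain ⟨p⟩ := (ConnectedComponent.exact hw).symm
  obtain ⟨d, -, hd, hd'⟩ := p.exists_boundary_dart S hv hwS
  exact hd' (hS _ hd d.adj)

lemma neighborSet_eq_pair {u p q : V} (h2 : (G.neighborSet u).ncard = 2) (hpq : p ≠ q)
    (hp : G.Adj u p) (hq : G.Adj u q) : G.neighborSet u = {p, q} :=
  (Set.eq_of_subset_of_ncard_le (s := {p, q}) (t := G.neighborSet u) (Set.pair_subset hp hq)
    (by rw [h2, Set.ncard_pair hpq]) (Set.finite_of_ncard_ne_zero (by rw [h2]; norm_num))).symm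

end SimpleGraph

open SimpleGraph

variable {V : Type*} {G : SimpleGraph V}

lemma IsC4Factor.cliqueFree_three (hG : IsC4Factor G) : G.CliqueFree 3 := by
  classical
  intro s hs
  obtain ⟨x, y, z, hxy, hxz, hyz, rfl⟩ := is3Clique_iff.1 hs
  have hclosed : ∀ u ∈ ({x, y, z} : Set V), G.neighborSet u ⊆ {x, y, z} := by
    rintro u (rfl | rfl | rfl)
    · rw [neighborSet_eq_pair (hG.1 u) hyz.ne hxy hxz]
      exact Set.subset_insert _ _
    · rw [neighborSet_eq_pair (hG.1 u) hxz.ne hxy.symm hyz]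
      exact Set.insert_subset_insert (Set.subset_insert _ _)
    · rw [neighborSet_eq_pair (hG.1 u) hxy.ne hxz.symm hyz.symm]
      exact Set.pair_subset (by simp) (by simp)
  have hsub := connectedComponentMk_supp_subset_of_neighborSet_subset hclosed (Set.mem_insert x _)
  have hle := Set.ncard_le_ncard hsub
  rw [hG.2, Set.ncard_eq_three.2 ⟨x, y, z, hxy.ne, hxz.ne, hyz.ne, rfl⟩] at hle
  omega

lemma IsC4Factor.adj_of_path_three (hG : IsC4Factor G) {x' x y y' : V} (h₁ : G.Adj x' x)
    (h₂ : G.Adj x y) (h₃ : G.Adj y y') (hx'y : x' ≠ y) (hxy' : x ≠ y') :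
    x' ≠ y' ∧ G.Adj x' y' := by
  classical
  have hx'y' : x' ≠ y' := by
    rintro rfl
    exact hG.cliqueFree_three {x, y, x'} (is3Clique_triple_iff.2 ⟨h₂, h₁.symm, h₃⟩)
  refine ⟨hx'y', ?_⟩
  set C := G.connectedComponentMk x
  have hx : x ∈ C.supp := rfl
  have hsupp : C.supp = {x', x, y, y'} := by
    have hy := C.mem_supp_of_adj_mem_supp hx h₂
    refine (Set.eq_of_subset_of_ncard_le ?_ ?_
      (Set.finite_of_ncard_ne_zero (by rw [hG.2]; norm_num))).symm
    · rintro v (rfl | rfl | rfl | rfl)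
      exacts [C.mem_supp_of_adj_mem_supp hx h₁.symm, hx, hy, C.mem_supp_of_adj_mem_supp hy h₃]
    · rw [hG.2, Set.ncard_eq_four.2 ⟨x', x, y, y', h₁.ne, hx'y, hx'y', h₂.ne, hxy', h₃.ne, rfl⟩]
  obtain ⟨w, hw, hwx⟩ := Set.exists_ne_of_one_lt_ncard (by rw [hG.1 x']; norm_num) x
  have hwC : w ∈ C.supp := C.mem_supp_of_adj_mem_supp (C.mem_supp_of_adj_mem_supp hx h₁.symm) hw
  rw [hsupp] at hwC
  rcases hwC with rfl | rfl | rfl | rfl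
  · exact absurd hw G.irrefl
  · exact absurd rfl hwx
  · exact absurd (is3Clique_triple_iff.2 ⟨h₁.symm, h₂, hw⟩) (hG.cliqueFree_three _)
  · exact hw

/-- If every two distinct colors of a proper `(2m-1)`-edge-coloring of `K_{2m}` induce a
`C4`-factor, `a ≠ c` are colors, `x ≠ y` are vertices with `μ(xy) = a`, and `x'`, `y'`
are the vertices joined to `x` and to `y` by an edge of color `c`, then `x, y, x', y'`
are four distinct vertices and `μ(x'y') = a`. -/
theorem C4Factor_translation_preserves_color (m : ℕ)
    (μ : Sym2 (Fin (2 * m)) → Fin (2 * m - 1))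
    (hproper : IsProperEdgeColoring μ)
    (hC4 : ∀ a b : Fin (2 * m - 1), a ≠ b → IsC4Factor (colorPairGraph μ a b))
    (a c : Fin (2 * m - 1)) (hac : a ≠ c)
    (x y x' y' : Fin (2 * m)) (hxy : x ≠ y) (ha : μ s(x, y) = a)
    (hx'ne : x' ≠ x) (hx'c : μ s(x, x') = c)
    (hy'ne : y' ≠ y) (hy'c : μ s(y, y') = c) :
    (x ≠ x' ∧ x ≠ y' ∧ y ≠ x' ∧ y ≠ y' ∧ x' ≠ y') ∧ μ s(x', y') = a := by
  have hyx' : y ≠ x' := by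
    rintro rfl
    exact hac (ha.symm.trans hx'c)
  have hxy' : x ≠ y' := by
    rintro rfl
    exact hac (ha.symm.trans (Sym2.eq_swap ▸ hy'c))
  obtain ⟨hx'y', hx'y'_adj⟩ := (hC4 a c hac).adj_of_path_three
    (show (colorPairGraph μ a c).Adj x' x from ⟨hx'ne, .inr (Sym2.eq_swap ▸ hx'c)⟩)
    ⟨hxy, .inl ha⟩ ⟨hy'ne.symm, .inr hy'c⟩ hyx'.symm hxy'
  refine ⟨⟨hx'ne.symm, hxy', hyx', hy'ne.symm, hx'y'⟩, hx'y'_adj.2.resolve_right fun h => ?_⟩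
  rw [Sym2.eq_swap] at h
  exact hproper y' x' y hx'y'.symm hy'ne hyx'.symm (h.trans (Sym2.eq_swap ▸ hy'c).symm)
end

section
/- Let φ be a proper (2m−1)-edge-coloring of the complete graph K_{2m} with m ≥ 2, let u be a vertex, and let x, y be two distinct vertices different from u, with c_1 = φ(ux) and c_2 = φ(uy). Let T be the spanning subgraph whose edges are: all edges incident to u except ux and uy, together with the edge of color c_2 at x and the edge of color c_1 at y. Then T is a multicolored spanning tree of K_{2m}. -/
/-- `modifiedStar u x y e₁ e₂` is the graph `S_u[x, y; c₁, c₂]`: it consists of all edges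
incident to `u` except `ux` and `uy`, together with the two edges `e₁` and `e₂`. -/
def modifiedStar {V : Type*} (u x y : V) (e₁ e₂ : Sym2 V) : SimpleGraph V :=
  SimpleGraph.fromEdgeSet
    ({e | ∃ v, v ≠ u ∧ v ≠ x ∧ v ≠ y ∧ e = s(u, v)} ∪ {e₁, e₂})


open SimpleGraph

theorem SimpleGraph.isTree_of_edgeSet_eq_image {V : Type*} [Finite V] {G : SimpleGraph V}
    (hconn : G.Connected) {r : V} {f : V → Sym2 V} (hf : Set.InjOn f {r}ᶜ)
    (hG : G.edgeSet = f '' {r}ᶜ) : G.IsTree := by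
  refine isTree_iff_connected_and_card.2 ⟨hconn, ?_⟩
  rw [Nat.card_coe_set_eq, hG, hf.ncard_image, ← Set.ncard_add_ncard_compl {r},
    Set.ncard_singleton, add_comm]

section ProperEdgeColoring

variable {V C : Type*} {φ : Sym2 V → C}

theorem IsProperEdgeColoring.injOn_star (hφ : IsProperEdgeColoring φ) (u : V) :
    Set.InjOn (fun v => φ s(u, v)) {u}ᶜ := fun v hv w hw h => by
  by_contra hvw
  exact hφ u v w (Ne.symm hv) (Ne.symm hw) hvw h

theorem IsProperEdgeColoring.ne_of_map_eq_map (hφ : IsProperEdgeColoring φ) {u x y x' : V}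
    (hux : u ≠ x) (huy : u ≠ y) (hxy : x ≠ y) (h : φ s(x, x') = φ s(u, y)) :
    x' ≠ u ∧ x' ≠ y := by
  constructor
  · rintro rfl
    exact hφ x' x y hux huy hxy (by rwa [Sym2.eq_swap])
  · rintro rfl
    exact hφ x' x u (Ne.symm hxy) (Ne.symm huy) (Ne.symm hux)
      (by rw [Sym2.eq_swap, h, Sym2.eq_swap])

end ProperEdgeColoring

section ModifiedStar

variable {V : Type*} {u x y x' y' : V}

theorem modifiedStar_connected (hx' : x' ≠ x) (hy' : y' ≠ y) (hx'u : x' ≠ u) (hx'y : x' ≠ y)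
    (hy'u : y' ≠ u) (hy'x : y' ≠ x) :
    (modifiedStar u x y s(x, x') s(y, y')).Connected := by
  have hstar : ∀ v, v ≠ u → v ≠ x → v ≠ y → (modifiedStar u x y s(x, x') s(y, y')).Adj u v :=
    fun v hvu hvx hvy => (fromEdgeSet_adj _).2 ⟨Or.inl ⟨v, hvu, hvx, hvy, rfl⟩, hvu.symm⟩
  have hx : (modifiedStar u x y s(x, x') s(y, y')).Adj x' x :=
    (fromEdgeSet_adj _).2 ⟨Or.inr (Or.inl Sym2.eq_swap), hx'⟩
  have hy : (modifiedStar u x y s(x, x') s(y, y')).Adj y' y :=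
    (fromEdgeSet_adj _).2 ⟨Or.inr (Or.inr Sym2.eq_swap), hy'⟩
  refine (connected_iff_exists_forall_reachable _).2 ⟨u, fun v => ?_⟩
  by_cases hvu : v = u
  · exact hvu ▸ .rfl
  by_cases hvx : v = x
  · exact hvx ▸ (hstar x' hx'u hx' hx'y).reachable.trans hx.reachable
  by_cases hvy : v = y
  · exact hvy ▸ (hstar y' hy'u hy'x hy').reachable.trans hy.reachable
  exact (hstar v hvu hvx hvy).reachable

variable [DecidableEq V] {C : Type*} {φ : Sym2 V → C}

/-- The neighbour of `v ≠ u` on the path from `v` to the root `u` in `S_u[x, y; c₁, c₂]`. -/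
def modifiedStarParent (u x y x' y' : V) (v : V) : V :=
  if v = x then x' else if v = y then y' else u

theorem edgeSet_modifiedStar_eq_image (hux : u ≠ x) (huy : u ≠ y) (hxy : x ≠ y) (hx' : x' ≠ x)
    (hy' : y' ≠ y) :
    (modifiedStar u x y s(x, x') s(y, y')).edgeSet =
      (fun v => s(v, modifiedStarParent u x y x' y' v)) '' {u}ᶜ := by
  have hS : {e | ∃ v, v ≠ u ∧ v ≠ x ∧ v ≠ y ∧ e = s(u, v)} ∪ {s(x, x'), s(y, y')} =
      (fun v => s(v, modifiedStarParent u x y x' y' v)) '' {u}ᶜ := by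
    ext e
    constructor
    · rintro (⟨v, hvu, hvx, hvy, rfl⟩ | rfl | rfl)
      · exact ⟨v, hvu, by simp [modifiedStarParent, hvx, hvy, Sym2.eq_swap]⟩
      · exact ⟨x, hux.symm, by simp [modifiedStarParent]⟩
      · exact ⟨y, huy.symm, by simp [modifiedStarParent, hxy.symm]⟩
    · rintro ⟨v, hvu, rfl⟩
      dsimp only [modifiedStarParent]
      split_ifs with hvx hvy
      · exact .inr (.inl (by rw [hvx]))
      · exact .inr (.inr (by rw [hvy]; rfl))
      · exact .inl ⟨v, hvu, hvx, hvy, Sym2.eq_swap⟩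
  rw [modifiedStar, edgeSet_fromEdgeSet, hS, sdiff_eq_left, Set.disjoint_right]
  rintro _ hdiag ⟨v, hvu, rfl⟩
  have hv : v = modifiedStarParent u x y x' y' v := Sym2.mk_isDiag_iff.1 hdiag
  unfold modifiedStarParent at hv
  split_ifs at hv with hvx hvy
  · exact hx' (hv.symm.trans hvx)
  · exact hy' (hv.symm.trans hvy)
  · exact hvu hv

theorem map_modifiedStarParent (hx : φ s(x, x') = φ s(u, y)) (hy : φ s(y, y') = φ s(u, x))
    (v : V) :
    φ s(v, modifiedStarParent u x y x' y' v) = φ s(u, Equiv.swap x y v) := by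
  unfold modifiedStarParent
  split_ifs with hvx hvy
  · rw [hvx, Equiv.swap_apply_left, hx]
  · rw [hvy, Equiv.swap_apply_right, hy]
  · rw [Equiv.swap_apply_of_ne_of_ne hvx hvy, Sym2.eq_swap]

theorem IsProperEdgeColoring.injOn_map_modifiedStarParent (hφ : IsProperEdgeColoring φ)
    (hux : u ≠ x) (huy : u ≠ y) (hx : φ s(x, x') = φ s(u, y)) (hy : φ s(y, y') = φ s(u, x)) :
    Set.InjOn (fun v => φ s(v, modifiedStarParent u x y x' y' v)) {u}ᶜ := by
  have hswap : Set.MapsTo (Equiv.swap x y) {u}ᶜ {u}ᶜ := fun v hv => by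
    rw [Set.mem_compl_singleton_iff, Ne, Equiv.swap_apply_eq_iff,
      Equiv.swap_apply_of_ne_of_ne hux huy]
    exact hv
  exact ((hφ.injOn_star u).comp (Equiv.swap x y).injective.injOn hswap).congr
    fun v _ => (map_modifiedStarParent hx hy v).symm

end ModifiedStar

theorem modifiedStar_isTree_multicolored_general (m : ℕ)
    (φ : Sym2 (Fin (2 * m)) → Fin (2 * m - 1))
    (hproper : IsProperEdgeColoring φ)
    (u x y : Fin (2 * m)) (hux : u ≠ x) (huy : u ≠ y) (hxy : x ≠ y)
    (c₁ c₂ : Fin (2 * m - 1)) (hc₁ : φ s(u, x) = c₁) (hc₂ : φ s(u, y) = c₂)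
    (x' y' : Fin (2 * m))
    (hx' : x' ≠ x) (hx'c : φ s(x, x') = c₂)
    (hy' : y' ≠ y) (hy'c : φ s(y, y') = c₁) :
    (modifiedStar u x y s(x, x') s(y, y')).IsTree ∧
    Set.InjOn φ (modifiedStar u x y s(x, x') s(y, y')).edgeSet := by
  have hx := hx'c.trans hc₂.symm
  have hy := hy'c.trans hc₁.symm
  obtain ⟨hx'u, hx'y⟩ := hproper.ne_of_map_eq_map hux huy hxy hx
  obtain ⟨hy'u, hy'x⟩ := hproper.ne_of_map_eq_map huy hux hxy.symm hy
  have hinj := hproper.injOn_map_modifiedStarParent hux huy hx hy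
  have hedges := edgeSet_modifiedStar_eq_image hux huy hxy hx' hy'
  refine ⟨isTree_of_edgeSet_eq_image (modifiedStar_connected hx' hy' hx'u hx'y hy'u hy'x)
    (hinj.of_comp (g := φ)) hedges, ?_⟩
  rw [hedges]
  exact hinj.image_of_comp

/-- If `φ` is a proper `(2m-1)`-edge-coloring of `K_{2m}` (`m ≥ 2`), `u, x, y` are
distinct vertices, `c₁ = φ(ux)`, `c₂ = φ(uy)`, and `x'` (resp. `y'`) is the other
endpoint of the edge of color `c₂` at `x` (resp. of color `c₁` at `y`), then the graph
`S_u[x, y; c₁, c₂]` — all edges at `u` except `ux`, `uy`, plus `xx'` and `yy'` — is a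
multicolored spanning tree of `K_{2m}`. -/
theorem modifiedStar_isTree_multicolored (m : ℕ) (hm : 2 ≤ m)
    (φ : Sym2 (Fin (2 * m)) → Fin (2 * m - 1))
    (hproper : IsProperEdgeColoring φ)
    (u x y : Fin (2 * m)) (hux : u ≠ x) (huy : u ≠ y) (hxy : x ≠ y)
    (c₁ c₂ : Fin (2 * m - 1)) (hc₁ : φ s(u, x) = c₁) (hc₂ : φ s(u, y) = c₂)
    (x' y' : Fin (2 * m))
    (hx' : x' ≠ x) (hx'c : φ s(x, x') = c₂)
    (hy' : y' ≠ y) (hy'c : φ s(y, y') = c₁) :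
    (modifiedStar u x y s(x, x') s(y, y')).IsTree ∧
    Set.InjOn φ (modifiedStar u x y s(x, x') s(y, y')).edgeSet :=
  modifiedStar_isTree_multicolored_general m φ hproper u x y hux huy hxy c₁ c₂ hc₁ hc₂ x' y' hx'
    hx'c hy' hy'c
end

section
/- Let φ be a proper (2m−1)-edge-coloring of the complete graph K_{2m} with m ≥ 3, and suppose there are four distinct vertices x_1, x_2, x_3, x_4 and colors a, b, c with φ(x_1 x_4) = φ(x_2 x_3) = a, φ(x_1 x_2) = b, φ(x_3 x_4) = c, and b ≠ c. Let T_1 be the spanning subgraph with edges: all edges incident to x_1 except x_1 x_2 and x_1 x_4, together with the edge x_2 x_3 and the edge of color b at x_4; let T_2 be the spanning subgraph with edges: all edges incident to x_2 except x_2 x_1 and x_2 x_3, together with the edge x_1 x_4 and the edge of color b at x_3. Then T_1 and T_2 are edge-disjoint multicolored spanning trees of K_{2m} that are isomorphic as graphs. -/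
/-!
`T₁` is the star at `x₁` on all vertices but `x₂, x₄`, with `x₂` and `x₄` hung as leaves on
`x₃` and `w₄`; adding a pendant edge to an isolated vertex keeps a graph acyclic, so `T₁` is a
tree. Properness at `x₁` makes the star edges carry distinct colours other than
`a = φ(x₁x₄)` and `b = φ(x₁x₂)`, and the two pendant edges carry exactly `a` and `b`, so `T₁` is
multicoloured. Properness also keeps `w₃, w₄` off the 4-cycle, which makes `T₁, T₂`
edge-disjoint, and the involution `(x₁ x₂)(x₃ x₄)(w₃ w₄)` carries `T₁` onto `T₂`.
-/

namespace SimpleGraph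

variable {V : Type*} {G : SimpleGraph V}

theorem IsAcyclic.of_forall_adj_eq_or_eq (u : V) (h : ∀ ⦃v w⦄, G.Adj v w → v = u ∨ w = u) :
    G.IsAcyclic := by
  have hbridge : ∀ z, G.Adj u z → G.IsBridge s(u, z) := by
    intro z huz
    refine isBridge_iff.2 <| not_reachable_of_neighborSet_right_eq_empty huz.ne ?_
    ext t
    simp only [mem_neighborSet, deleteEdges_adj, Set.mem_singleton_iff, Set.mem_empty_iff_false,
      iff_false, not_and, not_not]
    intro hzt
    rcases h hzt with rfl | rfl
    · exact absurd rfl huz.ne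
    · exact Sym2.eq_swap
  rw [isAcyclic_iff_forall_adj_isBridge]
  intro v w hvw
  rcases h hvw with rfl | rfl
  · exact hbridge w hvw
  · exact Sym2.eq_swap ▸ hbridge v hvw.symm

end SimpleGraph

open SimpleGraph

theorem IsProperEdgeColoring.eq_of_apply_eq {V C : Type*} {φ : Sym2 V → C}
    (hφ : IsProperEdgeColoring φ) {u v w : V} (hv : u ≠ v) (hw : u ≠ w)
    (h : φ s(u, v) = φ s(u, w)) : v = w :=
  by_contra fun hvw => hφ u v w hv hw hvw h

section ModifiedStar

variable {V : Type*} {u x y p q : V}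

theorem mem_edgeSet_modifiedStar {e₁ e₂ e : Sym2 V} :
    e ∈ (modifiedStar u x y e₁ e₂).edgeSet ↔
      ((∃ v, v ≠ u ∧ v ≠ x ∧ v ≠ y ∧ e = s(u, v)) ∨ e = e₁ ∨ e = e₂) ∧ ¬e.IsDiag := by
  simp only [modifiedStar, edgeSet_fromEdgeSet, Set.mem_sdiff, Set.mem_union, Set.mem_ofPred_eq,
    Set.mem_insert_iff, Set.mem_singleton_iff, Sym2.mem_diagSet]

theorem modifiedStar_eq_sup (u x y p q : V) :
    modifiedStar u x y s(x, p) s(y, q) =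
      fromEdgeSet {e | ∃ v, v ≠ u ∧ v ≠ x ∧ v ≠ y ∧ e = s(u, v)} ⊔ edge x p ⊔ edge y q := by
  rw [modifiedStar, Set.insert_eq, ← Set.union_assoc, fromEdgeSet_union, fromEdgeSet_union]
  rfl

theorem isTree_modifiedStar (hxu : x ≠ u) (hyu : y ≠ u) (hxy : x ≠ y)
    (hpu : p ≠ u) (hpx : p ≠ x) (hpy : p ≠ y) (hqu : q ≠ u) (hqx : q ≠ x) (hqy : q ≠ y) :
    (modifiedStar u x y s(x, p) s(y, q)).IsTree := by
  set T := modifiedStar u x y s(x, p) s(y, q) with hT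
  have hstar : ∀ v, v ≠ u → v ≠ x → v ≠ y → T.Adj u v := fun v hvu hvx hvy =>
    (fromEdgeSet_adj _).2 ⟨Or.inl ⟨v, hvu, hvx, hvy, rfl⟩, hvu.symm⟩
  have hxp : T.Adj x p := (fromEdgeSet_adj _).2 ⟨by simp, hpx.symm⟩
  have hyq : T.Adj y q := (fromEdgeSet_adj _).2 ⟨by simp, hqy.symm⟩
  refine ⟨(connected_iff_exists_forall_reachable _).2 ⟨u, fun v => ?_⟩, ?_⟩
  · by_cases hvu : v = u
    · exact hvu ▸ Reachable.rfl
    by_cases hvx : v = x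
    · exact hvx ▸ (hstar p hpu hpx hpy).reachable.trans hxp.symm.reachable
    by_cases hvy : v = y
    · exact hvy ▸ (hstar q hqu hqx hqy).reachable.trans hyq.symm.reachable
    exact (hstar v hvu hvx hvy).reachable
  · rw [hT, modifiedStar_eq_sup]
    set S : SimpleGraph V := fromEdgeSet {e | ∃ v, v ≠ u ∧ v ≠ x ∧ v ≠ y ∧ e = s(u, v)}
    have hS : ∀ {v w}, S.Adj v w → v = u ∧ w ≠ x ∧ w ≠ y ∨ w = u ∧ v ≠ x ∧ v ≠ y := by
      rintro v w ⟨⟨z, -, hzx, hzy, h⟩, -⟩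
      rcases Sym2.eq_iff.1 h with ⟨rfl, rfl⟩ | ⟨rfl, rfl⟩ <;> simp [hzx, hzy]
    refine ((IsAcyclic.of_forall_adj_eq_or_eq u fun v w hvw => ?_).sup_edge_of_not_reachable
      (not_reachable_of_neighborSet_left_eq_empty hpx.symm ?_)).sup_edge_of_not_reachable
      (not_reachable_of_neighborSet_left_eq_empty hqy.symm ?_)
    · exact (hS hvw).imp And.left And.left
    · refine Set.eq_empty_of_forall_notMem fun t ht => ?_
      rcases hS ht with ⟨h, -⟩ | ⟨-, h, -⟩
      exacts [hxu h, h rfl]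
    · refine Set.eq_empty_of_forall_notMem fun t ht => ?_
      rcases ht with ht | ht
      · rcases hS ht with ⟨h, -⟩ | ⟨-, -, h⟩
        exacts [hyu h, h rfl]
      · rcases (edge_adj _ _ _ _).1 ht with ⟨⟨h, -⟩ | ⟨h, -⟩, -⟩
        exacts [hxy h.symm, hpy h.symm]

theorem injOn_edgeSet_modifiedStar {C : Type*} {φ : Sym2 V → C} (hφ : IsProperEdgeColoring φ)
    (hxu : x ≠ u) (hyu : y ≠ u) (hxy : x ≠ y)
    (hp : φ s(x, p) = φ s(u, y)) (hq : φ s(y, q) = φ s(u, x)) :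
    Set.InjOn φ (modifiedStar u x y s(x, p) s(y, q)).edgeSet := by
  -- Every edge gets the colour of a distinct edge at `u`: `s(u, v)` its own, `s(x, p)` that
  -- of `s(u, y)`, and `s(y, q)` that of `s(u, x)`.
  have hcol : ∀ {v w}, v ≠ u → w ≠ u → φ s(u, v) = φ s(u, w) → v = w :=
    fun hv hw => hφ.eq_of_apply_eq hv.symm hw.symm
  intro e he f hf hef
  rcases (mem_edgeSet_modifiedStar.1 he).1 with ⟨v, hvu, hvx, hvy, rfl⟩ | rfl | rfl <;>
    rcases (mem_edgeSet_modifiedStar.1 hf).1 with ⟨w, hwu, hwx, hwy, rfl⟩ | rfl | rfl <;>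
    grind

theorem nonempty_iso_modifiedStar {W : Type*} (σ : V ≃ W) (u x y : V) (e₁ e₂ : Sym2 V) :
    Nonempty (modifiedStar u x y e₁ e₂ ≃g
      modifiedStar (σ u) (σ x) (σ y) (e₁.map σ) (e₂.map σ)) := by
  refine ⟨⟨σ, fun {a b} => ?_⟩⟩
  have hinj : Function.Injective (Sym2.map σ) := Sym2.map.injective σ.injective
  simp only [modifiedStar, fromEdgeSet_adj, ← Sym2.map_mk, Set.mem_union, Set.mem_ofPred_eq,
    Set.mem_insert_iff, Set.mem_singleton_iff, hinj.eq_iff, σ.surjective.exists,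
    σ.injective.ne_iff]

theorem disjoint_edgeSet_modifiedStar {x₁ x₂ x₃ x₄ w₃ w₄ : V}
    (h12 : x₁ ≠ x₂) (h13 : x₁ ≠ x₃) (h24 : x₂ ≠ x₄) (h34 : x₃ ≠ x₄)
    (hw₃x₁ : w₃ ≠ x₁) (hw₃x₂ : w₃ ≠ x₂) (hw₄x₁ : w₄ ≠ x₁) (hw₄x₂ : w₄ ≠ x₂) (hw₄x₃ : w₄ ≠ x₃) :
    Disjoint (modifiedStar x₁ x₂ x₄ s(x₂, x₃) s(x₄, w₄)).edgeSet
      (modifiedStar x₂ x₁ x₃ s(x₁, x₄) s(x₃, w₃)).edgeSet := by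
  refine Set.disjoint_left.2 fun e he hf => ?_
  rcases (mem_edgeSet_modifiedStar.1 he).1 with ⟨v, hv₁, hv₂, hv₄, rfl⟩ | rfl | rfl <;>
    rcases (mem_edgeSet_modifiedStar.1 hf).1 with ⟨w, hw₂, hw₁, hw₃, h⟩ | h | h <;>
    simp only [Sym2.eq_iff] at h <;> grind

end ModifiedStar

theorem two_modifiedStars_disjoint_isomorphic_general (m : ℕ)
    (φ : Sym2 (Fin (2 * m)) → Fin (2 * m - 1))
    (hproper : IsProperEdgeColoring φ)
    (x₁ x₂ x₃ x₄ : Fin (2 * m))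
    (hne : x₁ ≠ x₂ ∧ x₁ ≠ x₃ ∧ x₁ ≠ x₄ ∧ x₂ ≠ x₃ ∧ x₂ ≠ x₄ ∧ x₃ ≠ x₄)
    (a b c : Fin (2 * m - 1)) (hbc : b ≠ c)
    (ha14 : φ s(x₁, x₄) = a) (ha23 : φ s(x₂, x₃) = a)
    (hb : φ s(x₁, x₂) = b) (hc : φ s(x₃, x₄) = c)
    (w₄ : Fin (2 * m)) (hw₄ : w₄ ≠ x₄) (hw₄b : φ s(x₄, w₄) = b)
    (w₃ : Fin (2 * m)) (hw₃ : w₃ ≠ x₃) (hw₃b : φ s(x₃, w₃) = b) :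
    (modifiedStar x₁ x₂ x₄ s(x₂, x₃) s(x₄, w₄)).IsTree ∧
    (modifiedStar x₂ x₁ x₃ s(x₁, x₄) s(x₃, w₃)).IsTree ∧
    Set.InjOn φ (modifiedStar x₁ x₂ x₄ s(x₂, x₃) s(x₄, w₄)).edgeSet ∧
    Set.InjOn φ (modifiedStar x₂ x₁ x₃ s(x₁, x₄) s(x₃, w₃)).edgeSet ∧
    Disjoint (modifiedStar x₁ x₂ x₄ s(x₂, x₃) s(x₄, w₄)).edgeSet
      (modifiedStar x₂ x₁ x₃ s(x₁, x₄) s(x₃, w₃)).edgeSet ∧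
    Nonempty ((modifiedStar x₁ x₂ x₄ s(x₂, x₃) s(x₄, w₄)) ≃g
      (modifiedStar x₂ x₁ x₃ s(x₁, x₄) s(x₃, w₃))) := by
  obtain ⟨h12, h13, h14, h23, h24, h34⟩ := hne
  have hab : a ≠ b := ha14 ▸ hb ▸ hproper x₁ x₄ x₂ h14 h12 h24.symm
  have hw₄x₁ : w₄ ≠ x₁ := by rintro rfl; exact hab (by rw [← ha14, ← hw₄b, Sym2.eq_swap])
  have hw₄x₂ : w₄ ≠ x₂ := by
    rintro rfl
    exact h14 (hproper.eq_of_apply_eq h12.symm h24 (by rw [Sym2.eq_swap, hb, Sym2.eq_swap, hw₄b]))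
  have hw₄x₃ : w₄ ≠ x₃ := by rintro rfl; exact hbc (by rw [← hc, ← hw₄b, Sym2.eq_swap])
  have hw₃x₁ : w₃ ≠ x₁ := by
    rintro rfl
    exact h23 (hproper.eq_of_apply_eq h12 h13 (by rw [hb, Sym2.eq_swap, hw₃b]))
  have hw₃x₂ : w₃ ≠ x₂ := by rintro rfl; exact hab (by rw [← ha23, ← hw₃b, Sym2.eq_swap])
  have hw₃x₄ : w₃ ≠ x₄ := by rintro rfl; exact hbc (by rw [← hc, ← hw₃b])
  refine ⟨isTree_modifiedStar h12.symm h14.symm h24 h13.symm h23.symm h34 hw₄x₁ hw₄x₂ hw₄,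
    isTree_modifiedStar h12 h23.symm h13 h24.symm h14.symm h34.symm hw₃x₂ hw₃x₁ hw₃,
    injOn_edgeSet_modifiedStar hproper h12.symm h14.symm h24 (ha23.trans ha14.symm)
      (hw₄b.trans hb.symm),
    injOn_edgeSet_modifiedStar hproper h12 h23.symm h13 (ha14.trans ha23.symm)
      (hw₃b.trans (Sym2.eq_swap ▸ hb).symm),
    disjoint_edgeSet_modifiedStar h12 h13 h24 h34 hw₃x₁ hw₃x₂ hw₄x₁ hw₄x₂ hw₄x₃, ?_⟩
  simpa [Equiv.swap_apply_of_ne_of_ne, Ne.symm, h12, h13, h14, h23, h24, h34, hw₃, hw₄, hw₃x₁,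
    hw₃x₂, hw₃x₄, hw₄x₁, hw₄x₂, hw₄x₃] using
    nonempty_iso_modifiedStar (Equiv.swap x₁ x₂ * Equiv.swap x₃ x₄ * Equiv.swap w₃ w₄)
      x₁ x₂ x₄ s(x₂, x₃) s(x₄, w₄)

/-- **Case 1 of Lemma 5.** Given a proper `(2m-1)`-edge-coloring `φ` of `K_{2m}`
(`m ≥ 3`) and a 4-cycle `(x₁, x₂, x₃, x₄)` with `φ(x₁x₄) = φ(x₂x₃) = a`,
`φ(x₁x₂) = b`, `φ(x₃x₄) = c` and `b ≠ c`, the trees `T₁ = S_{x₁}[x₂, x₄; b, a]`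
(all edges at `x₁` except `x₁x₂`, `x₁x₄`, plus `x₂x₃` and the edge of color `b`
at `x₄`) and `T₂ = S_{x₂}[x₁, x₃; b, a]` (all edges at `x₂` except `x₂x₁`, `x₂x₃`,
plus `x₁x₄` and the edge of color `b` at `x₃`) are edge-disjoint multicolored
spanning trees of `K_{2m}`, isomorphic as graphs. -/
theorem two_modifiedStars_disjoint_isomorphic (m : ℕ) (hm : 3 ≤ m)
    (φ : Sym2 (Fin (2 * m)) → Fin (2 * m - 1))
    (hproper : IsProperEdgeColoring φ)
    (x₁ x₂ x₃ x₄ : Fin (2 * m))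
    (hne : x₁ ≠ x₂ ∧ x₁ ≠ x₃ ∧ x₁ ≠ x₄ ∧ x₂ ≠ x₃ ∧ x₂ ≠ x₄ ∧ x₃ ≠ x₄)
    (a b c : Fin (2 * m - 1)) (hbc : b ≠ c)
    (ha14 : φ s(x₁, x₄) = a) (ha23 : φ s(x₂, x₃) = a)
    (hb : φ s(x₁, x₂) = b) (hc : φ s(x₃, x₄) = c)
    (w₄ : Fin (2 * m)) (hw₄ : w₄ ≠ x₄) (hw₄b : φ s(x₄, w₄) = b)
    (w₃ : Fin (2 * m)) (hw₃ : w₃ ≠ x₃) (hw₃b : φ s(x₃, w₃) = b) :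
    (modifiedStar x₁ x₂ x₄ s(x₂, x₃) s(x₄, w₄)).IsTree ∧
    (modifiedStar x₂ x₁ x₃ s(x₁, x₄) s(x₃, w₃)).IsTree ∧
    Set.InjOn φ (modifiedStar x₁ x₂ x₄ s(x₂, x₃) s(x₄, w₄)).edgeSet ∧
    Set.InjOn φ (modifiedStar x₂ x₁ x₃ s(x₁, x₄) s(x₃, w₃)).edgeSet ∧
    Disjoint (modifiedStar x₁ x₂ x₄ s(x₂, x₃) s(x₄, w₄)).edgeSet
      (modifiedStar x₂ x₁ x₃ s(x₁, x₄) s(x₃, w₃)).edgeSet ∧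
    Nonempty ((modifiedStar x₁ x₂ x₄ s(x₂, x₃) s(x₄, w₄)) ≃g
      (modifiedStar x₂ x₁ x₃ s(x₁, x₄) s(x₃, w₃))) :=
  two_modifiedStars_disjoint_isomorphic_general m φ hproper x₁ x₂ x₃ x₄ hne a b c hbc ha14 ha23 hb
    hc w₄ hw₄ hw₄b w₃ hw₃ hw₃b
end
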